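/- arXiv:1609.02189 — 7 statements merged into one kernel-verified Lean document; each statement's English description precedes it below -/
import Mathlib

section
/- Every monochromatic noncrossing partition of order n has at least n+1 blocks. -/
open Finset

/-- Two blocks `B`, `B'` of a partition of a linearly ordered set *cross* if there are
elements `a < b < c < d` with `a, c ∈ B` and `b, d ∈ B'`. -/
def Crosses {α : Type*} [LinearOrder α] (B B' : Finset α) : Prop :=
  ∃ a b c d : α, a < b ∧ b < c ∧ c < d ∧ a ∈ B ∧ c ∈ B ∧ b ∈ B' ∧ d ∈ B'

/-- A family of blocks is *noncrossing* if no two distinct blocks cross. -/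
def NoncrossingFam {α : Type*} [LinearOrder α] (F : Finset (Finset α)) : Prop :=
  ∀ B ∈ F, ∀ B' ∈ F, B ≠ B' → ¬ Crosses B B'

/-- On `X = {x_1⁺ < x_1⁻ < ⋯ < x_n⁺ < x_n⁻}`, modeled as `Fin (2*n)` with `x_k⁺` at the even
index `2(k-1)` and `x_k⁻` at the odd index `2k-1`, a partition is *monochromatic* if every
block is a subset of `X⁺` (even indices) or of `X⁻` (odd indices). -/
def Mono {n : ℕ} (P : Finpartition (univ : Finset (Fin (2 * n)))) : Prop :=
  ∀ B ∈ P.parts, (∀ i ∈ B, Even (i : ℕ)) ∨ (∀ i ∈ B, Odd (i : ℕ))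

/-- Every monochromatic noncrossing partition of order `n` has at least `n + 1` blocks. -/
theorem stmt0 (n : ℕ) (hn : 0 < n) (P : Finpartition (univ : Finset (Fin (2 * n))))
    (hnc : NoncrossingFam P.parts) (hm : Mono P) : n + 1 ≤ P.parts.card := by
  classical
  -- key lemma: if i, j lie in a common block and i+1 < j, then i+1 is the minimum of its block
  have key : ∀ B ∈ P.parts, ∀ i ∈ B, ∀ j ∈ B, ∀ k : Fin (2 * n), (k : ℕ) = (i : ℕ) + 1 →
      (k : ℕ) < (j : ℕ) → ∀ y ∈ P.part k, k ≤ y := by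
    intro B hB i hi j hj k hk hkj y hy
    by_contra hyk
    push_neg at hyk
    have hkB : k ∉ B := by
      intro hkB
      rcases hm B hB with he | ho
      · obtain ⟨a, ha⟩ := he i hi
        obtain ⟨b, hb⟩ := he k hkB
        omega
      · obtain ⟨a, ha⟩ := ho i hi
        obtain ⟨b, hb⟩ := ho k hkB
        omega
    have hBk : P.part k ∈ P.parts := P.part_mem.mpr (mem_univ k)
    have hkk : k ∈ P.part k := P.mem_part (mem_univ k)
    have hne : P.part k ≠ B := fun h => hkB (h ▸ hkk)
    have hyi : y ≠ i := by
      intro h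
      exact hkB ((P.eq_of_mem_parts hBk hB (h ▸ hy) hi) ▸ hkk)
    have hyv : (y : ℕ) ≠ (i : ℕ) := fun hh => hyi (Fin.ext hh)
    have h1 : y < i := by
      rw [Fin.lt_def] at hyk ⊢; omega
    have h2 : i < k := by rw [Fin.lt_def]; omega
    have h3 : k < j := by rw [Fin.lt_def]; omega
    exact hnc (P.part k) hBk B hB hne ⟨y, i, k, j, h1, h2, h3, hy, hkk, hi, hj⟩
  have h2n : 0 < 2 * n := by omega
  set mins : Finset (Fin (2 * n)) := univ.filter (fun x => ∀ y ∈ P.part x, x ≤ y) with hminsdef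
  have hmins_mem : ∀ x : Fin (2 * n), x ∈ mins ↔ ∀ y ∈ P.part x, x ≤ y := by
    intro x; simp [hminsdef]
  -- mins.card = P.parts.card
  have hcard : mins.card = P.parts.card := by
    apply Finset.card_bij (fun x _ => P.part x)
    · intro a ha; exact P.part_mem.mpr (mem_univ a)
    · intro a ha b hb hab
      have ha' := (hmins_mem a).mp ha
      have hb' := (hmins_mem b).mp hb
      have h1 : a ≤ b := ha' b (hab.symm ▸ P.mem_part (mem_univ b))
      have h2 : b ≤ a := hb' a (hab ▸ P.mem_part (mem_univ a))
      exact le_antisymm h1 h2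
    · intro B hB
      obtain ⟨x, hx⟩ := P.nonempty_of_mem_parts hB
      have hpm : P.part (B.min' ⟨x, hx⟩) = B := P.part_eq_of_mem hB (B.min'_mem _)
      refine ⟨B.min' ⟨x, hx⟩, (hmins_mem _).mpr ?_, hpm⟩
      intro y hy
      exact B.min'_le y (hpm ▸ hy)
  -- 0 is in mins
  have h0 : (⟨0, h2n⟩ : Fin (2 * n)) ∈ mins := by
    rw [hmins_mem]
    intro y hy
    exact Nat.zero_le _
  -- the injection from non-minima to mins \ {0}
  set g : Fin (2 * n) → ℕ :=
    fun j => ((P.part j).filter (fun z => z < j)).sup (fun z => (z : ℕ)) with hg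
  set f : Fin (2 * n) → Fin (2 * n) :=
    fun j => if h : g j + 1 < 2 * n then ⟨g j + 1, h⟩ else j with hf
  -- structural facts about f on non-minima
  have hstruct : ∀ j : Fin (2 * n), j ∉ mins →
      ∃ i : Fin (2 * n), i ∈ P.part j ∧ i < j ∧ g j = (i : ℕ) ∧ (i : ℕ) + 1 < (j : ℕ) ∧
        (f j : ℕ) = (i : ℕ) + 1 := by
    intro j hj
    have hj' : ∃ y ∈ P.part j, y < j := by
      by_contra hc
      push_neg at hc
      exact hj ((hmins_mem j).mpr (fun y hy => hc y hy))
    obtain ⟨y, hy, hyj⟩ := hj'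
    have hne : ((P.part j).filter (fun z => z < j)).Nonempty :=
      ⟨y, mem_filter.mpr ⟨hy, hyj⟩⟩
    obtain ⟨i, hi, hisup⟩ := Finset.exists_mem_eq_sup _ hne (fun z => (z : ℕ))
    rw [mem_filter] at hi
    have hij : (i : ℕ) + 1 < (j : ℕ) := by
      have hBj := P.part_mem.mpr (mem_univ j)
      have hjj := P.mem_part (mem_univ j)
      have hilt : (i : ℕ) < (j : ℕ) := Fin.lt_def.mp hi.2
      rcases hm _ hBj with he | ho
      · obtain ⟨a, ha⟩ := he i hi.1
        obtain ⟨b, hb⟩ := he j hjj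
        omega
      · obtain ⟨a, ha⟩ := ho i hi.1
        obtain ⟨b, hb⟩ := ho j hjj
        omega
    have hgj : g j = (i : ℕ) := hisup
    refine ⟨i, hi.1, hi.2, hgj, hij, ?_⟩
    rw [hf]
    have hlt : g j + 1 < 2 * n := by have := j.isLt; omega
    simp only [hlt, dif_pos]
    simp [hgj]
  have hmaps : ∀ j ∈ univ \ mins, f j ∈ mins.erase ⟨0, h2n⟩ := by
    intro j hj
    rw [mem_sdiff] at hj
    obtain ⟨i, hi, hilt, hgj, hij, hfj⟩ := hstruct j hj.2
    rw [Finset.mem_erase]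
    constructor
    · intro h
      have h' := Fin.ext_iff.mp h
      simp at h'
      omega
    · rw [hmins_mem]
      exact key (P.part j) (P.part_mem.mpr (mem_univ j)) i hi j (P.mem_part (mem_univ j))
        (f j) hfj (by omega)
  have hinj : Set.InjOn f ↑(univ \ mins) := by
    have haux : ∀ j ∈ univ \ mins, ∀ j' ∈ univ \ mins, f j = f j' → j < j' → False := by
      intro j hj j' hj' hff hlt
      rw [mem_sdiff] at hj hj'
      obtain ⟨i, hi, hilt, hgj, hij, hfj⟩ := hstruct j hj.2
      obtain ⟨i', hi', hilt', hgj', hij', hfj'⟩ := hstruct j' hj'.2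
      have hii : i = i' := by
        have := Fin.ext_iff.mp hff
        rw [hfj, hfj'] at this
        exact Fin.ext (by omega)
      subst hii
      have hpp : P.part j = P.part j' :=
        P.eq_of_mem_parts (P.part_mem.mpr (mem_univ j)) (P.part_mem.mpr (mem_univ j')) hi hi'
      have hjmem : j ∈ (P.part j').filter (fun z => z < j') :=
        mem_filter.mpr ⟨hpp ▸ P.mem_part (mem_univ j), hlt⟩
      have hsup : (j : ℕ) ≤ ((P.part j').filter (fun z => z < j')).sup (fun z => (z : ℕ)) :=
        Finset.le_sup (f := fun z : Fin (2 * n) => (z : ℕ)) hjmem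
      have hsup' : (j : ℕ) ≤ g j' := hsup
      have := Fin.lt_def.mp hilt
      omega
    intro j hj j' hj' hff
    rcases lt_trichotomy j j' with h | h | h
    · exact absurd (haux j hj j' hj' hff h) (fun x => x)
    · exact h
    · exact absurd (haux j' hj' j hj hff.symm h) (fun x => x)
  have hle : (univ \ mins).card ≤ (mins.erase ⟨0, h2n⟩).card :=
    Finset.card_le_card_of_injOn f hmaps hinj
  rw [card_sdiff_of_subset (subset_univ _), card_erase_of_mem h0] at hle
  have hms : mins.card ≤ (univ : Finset (Fin (2 * n))).card := card_le_card (subset_univ _)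
  rw [card_univ, Fintype.card_fin] at hle hms
  omega
end

section
/- If P is a noncrossing partition of a set of cardinality m with n blocks, then its Kreweras complement K(P) has m - n + 1 blocks. -/
open Finset
set_option maxHeartbeats 1600000

/-- `a, b, c, d` are in (strict) cyclic order on `Fin N`. -/
def Cyc4 {N : ℕ} (a b c d : Fin N) : Prop :=
  (a < b ∧ b < c ∧ c < d) ∨ (b < c ∧ c < d ∧ d < a) ∨
  (c < d ∧ d < a ∧ a < b) ∨ (d < a ∧ a < b ∧ b < c)

/-- Blocks `B`, `B'` cross with respect to the cyclic order on `Fin N`. -/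
def CrossesCyc {N : ℕ} (B B' : Finset (Fin N)) : Prop :=
  ∃ a b c d, a ∈ B ∧ c ∈ B ∧ b ∈ B' ∧ d ∈ B' ∧ Cyc4 a b c d

/-- A family of blocks is cyclically noncrossing. -/
def CrossFreeCyc {N : ℕ} (F : Finset (Finset (Fin N))) : Prop :=
  ∀ B ∈ F, ∀ B' ∈ F, B ≠ B' → ¬ CrossesCyc B B'

/-- Place the element `i` of `{1, …, m}` at position `2i` of the interleaved cycle. -/
def evenEmb (m : ℕ) (i : Fin m) : Fin (2 * m) := ⟨2 * i.1, by have := i.2; omega⟩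

/-- Place the primed element `i'` at position `2i + 1` of the interleaved cycle,
between `i` and `i + 1` (cyclically). -/
def oddEmb (m : ℕ) (i : Fin m) : Fin (2 * m) := ⟨2 * i.1 + 1, by have := i.2; omega⟩

/-- The union `P ∪ Q` of a partition `P` of `{1, …, m}` and a partition `Q` of the primed
copies `{1', …, m'}`, as a family of blocks on the interleaved cyclically ordered set
`{1, 1', 2, 2', …, m, m'}`. -/
def interleaved (m : ℕ) (P Q : Finpartition (univ : Finset (Fin m))) :
    Finset (Finset (Fin (2 * m))) :=
  P.parts.image (Finset.image (evenEmb m)) ∪ Q.parts.image (Finset.image (oddEmb m))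

/-- `Q` is the Kreweras complement of `P`: `P ∪ Q` is noncrossing on the interleaved
cycle, and `Q` is the maximal (coarsest) partition of the primed copies with this
property. -/
def IsKrewerasComplement (m : ℕ) (P Q : Finpartition (univ : Finset (Fin m))) : Prop :=
  CrossFreeCyc (interleaved m P Q) ∧
  ∀ Q' : Finpartition (univ : Finset (Fin m)),
    CrossFreeCyc (interleaved m P Q') → ∀ b ∈ Q'.parts, ∃ c ∈ Q.parts, b ⊆ c
def Btwn {N : ℕ} (a b c : Fin N) : Prop :=
  (a < b ∧ b < c) ∨ (b < c ∧ c < a) ∨ (c < a ∧ a < b)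

lemma cyc4_iff {N : ℕ} {a b c d : Fin N} : Cyc4 a b c d ↔ Btwn a b c ∧ Btwn c d a := by
  simp only [Cyc4, Btwn, Fin.lt_def]; omega

lemma cyc4_rot {N : ℕ} {a b c d : Fin N} (h : Cyc4 a b c d) : Cyc4 b c d a := by
  simp only [Cyc4, Fin.lt_def] at *; omega

instance {N : ℕ} (a b c d : Fin N) : Decidable (Cyc4 a b c d) := by
  unfold Cyc4; infer_instance

def SepBy {N : ℕ} (E : Finset (Fin N)) (x y : Fin N) : Prop :=
  ∃ p ∈ E, ∃ q ∈ E, Cyc4 x p y q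

instance {N : ℕ} (E : Finset (Fin N)) (x y : Fin N) : Decidable (SepBy E x y) := by
  unfold SepBy; infer_instance

def RelF {N : ℕ} (F : Finset (Finset (Fin N))) (x y : Fin N) : Prop :=
  ∀ C ∈ F, ¬ SepBy C x y

instance {N : ℕ} (F : Finset (Finset (Fin N))) (x y : Fin N) : Decidable (RelF F x y) := by
  unfold RelF; infer_instance

lemma relF_refl {N : ℕ} (F : Finset (Finset (Fin N))) (x : Fin N) : RelF F x x := by
  rintro C hC ⟨p, hp, q, hq, hc⟩
  rw [cyc4_iff] at hc
  simp only [Btwn, Fin.lt_def] at hc; omega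

lemma sepBy_symm {N : ℕ} {E : Finset (Fin N)} {x y : Fin N} (h : SepBy E x y) : SepBy E y x := by
  obtain ⟨p, hp, q, hq, hc⟩ := h
  exact ⟨q, hq, p, hp, cyc4_rot (cyc4_rot hc)⟩

lemma relF_symm {N : ℕ} {F : Finset (Finset (Fin N))} {x y : Fin N}
    (h : RelF F x y) : RelF F y x := fun C hC hs => h C hC (sepBy_symm hs)

lemma sepBy_mono {N : ℕ} {E E' : Finset (Fin N)} {x y : Fin N} (hE : E ⊆ E')
    (h : SepBy E x y) : SepBy E' x y := by
  obtain ⟨p, hp, q, hq, hc⟩ := h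
  exact ⟨p, hE hp, q, hE hq, hc⟩

lemma relF_trans {N : ℕ} {F : Finset (Finset (Fin N))} {x y z : Fin N}
    (hy : ∀ C ∈ F, y ∉ C)
    (h1 : RelF F x y) (h2 : RelF F y z) : RelF F x z := by
  rintro C hC ⟨p, hp, q, hq, hc⟩
  rw [cyc4_iff] at hc
  obtain ⟨hc1, hc2⟩ := hc
  have hyp : y ≠ p := fun h => (hy C hC) (h ▸ hp)
  have hyq : y ≠ q := fun h => (hy C hC) (h ▸ hq)
  by_cases hxy : y = x
  · exact h2 C hC ⟨p, hp, q, hq, cyc4_iff.2 ⟨hxy ▸ hc1, hxy ▸ hc2⟩⟩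
  by_cases hzy : y = z
  · exact h1 C hC ⟨p, hp, q, hq, cyc4_iff.2 ⟨hzy ▸ hc1, hzy ▸ hc2⟩⟩
  -- y is somewhere; case on position
  have hyp' : y.1 ≠ p.1 := fun h => hyp (Fin.ext h)
  have hyq' : y.1 ≠ q.1 := fun h => hyq (Fin.ext h)
  have hxy' : y.1 ≠ x.1 := fun h => hxy (Fin.ext h)
  have hzy' : y.1 ≠ z.1 := fun h => hzy (Fin.ext h)
  have htri : Btwn x y z ∨ Btwn z y x := by
    simp only [Btwn, Fin.lt_def] at hc1 hc2 ⊢; omega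
  rcases htri with hmid | hmid
  · have : (Btwn x p y ∧ Btwn y q x) ∨ (Btwn y p z ∧ Btwn z q y) := by
      simp only [Btwn, Fin.lt_def] at hc1 hc2 hmid ⊢; omega
    rcases this with ⟨ha, hb⟩ | ⟨ha, hb⟩
    · exact h1 C hC ⟨p, hp, q, hq, cyc4_iff.2 ⟨ha, hb⟩⟩
    · exact h2 C hC ⟨p, hp, q, hq, cyc4_iff.2 ⟨ha, hb⟩⟩
  · have : (Btwn x p y ∧ Btwn y q x) ∨ (Btwn y p z ∧ Btwn z q y) := by
      simp only [Btwn, Fin.lt_def] at hc1 hc2 hmid ⊢; omega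
    rcases this with ⟨ha, hb⟩ | ⟨ha, hb⟩
    · exact h1 C hC ⟨p, hp, q, hq, cyc4_iff.2 ⟨ha, hb⟩⟩
    · exact h2 C hC ⟨p, hp, q, hq, cyc4_iff.2 ⟨ha, hb⟩⟩
lemma sepBy_propagate {N : ℕ} {E : Finset (Fin N)} {a b c d : Fin N}
    (hEe : ∀ z ∈ E, z.1 % 2 = 0)
    (hc : c.1 % 2 = 1) (hd : d.1 % 2 = 1)
    (h4 : Cyc4 a b c d) (hs : SepBy E a b) : SepBy E a c ∨ SepBy E b d := by
  obtain ⟨p, hp, q, hq, hc4⟩ := hs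
  rw [cyc4_iff] at h4 hc4
  have hqe := hEe q hq; have hpe := hEe p hp
  have : (Btwn a p c ∧ Btwn c q a) ∨ (Btwn b q d ∧ Btwn d p b) := by
    simp only [Btwn, Fin.lt_def] at *; omega
  rcases this with ⟨h1,h2⟩|⟨h1,h2⟩
  · exact Or.inl ⟨p, hp, q, hq, cyc4_iff.2 ⟨h1,h2⟩⟩
  · exact Or.inr ⟨q, hq, p, hp, cyc4_iff.2 ⟨h1,h2⟩⟩

lemma fiber_core {N : ℕ} (F : Finset (Finset (Fin N)))
    (hev : ∀ C ∈ F, ∀ z ∈ C, z.1 % 2 = 0)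
    (hdisj : ∀ C ∈ F, ∀ D ∈ F, C ≠ D → Disjoint C D)
    (hnc : ∀ C ∈ F, ∀ D ∈ F, C ≠ D → ¬ CrossesCyc C D)
    (B : Finset (Fin N)) (hB : B ∈ F) (b : Fin N) (hb : b ∈ B)
    (z0 : Fin N) (hz0 : z0 ∈ B.erase b)
    (X Y : Fin N)
    (hX : X.1 + 1 = b.1 ∨ (b.1 = 0 ∧ X.1 + 1 = N))
    (hY : b.1 + 1 = Y.1)
    (u v : Fin N) (hu : u.1 % 2 = 1) (hv : v.1 % 2 = 1)
    (huv' : RelF (insert (B.erase b) (F.erase B)) u v)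
    (hbuv : Btwn u b v)
    (herase : ∀ z ∈ B.erase b, Btwn v z u) :
    RelF F u X ∧ RelF F v Y := by
  have hbe : b.1 % 2 = 0 := hev B hB b hb
  have hz0m : z0 ∈ B := Finset.mem_of_mem_erase hz0
  have hz0b : z0 ≠ b := Finset.ne_of_mem_erase hz0
  have hz0b' : z0.1 ≠ b.1 := fun h => hz0b (Fin.ext h)
  have hz0e : z0.1 % 2 = 0 := hev B hB z0 hz0m
  have hz0vu : Btwn v z0 u := herase z0 hz0
  constructor
  · -- RelF F u X
    rintro C hC ⟨p, hp, q, hq, hc4⟩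
    rw [cyc4_iff] at hc4
    obtain ⟨h1, h2⟩ := hc4  -- Btwn u p X, Btwn X q u
    have hpe : p.1 % 2 = 0 := hev C hC p hp
    have hqe : q.1 % 2 = 0 := hev C hC q hq
    by_cases hCB : C = B
    · subst hCB
      -- p ∈ B; p ≠ b since nothing strictly in arc(u, b-1) can be b
      have hpb : p ≠ b := by
        intro h; subst h
        simp only [Btwn, Fin.lt_def] at h1 hbuv; omega
      have := herase p (Finset.mem_erase.2 ⟨hpb, hp⟩)
      simp only [Btwn, Fin.lt_def] at this h1 h2 hbuv; omega
    · have hCF' : C ∈ insert (B.erase b) (F.erase B) :=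
        Finset.mem_insert.2 (Or.inr (Finset.mem_erase.2 ⟨hCB, hC⟩))
      have hnsuv := huv' C hCF'
      have hdCB := hdisj C hC B hB hCB
      have hqb : q ≠ b := fun h => (Finset.disjoint_left.1 hdCB hq) (h ▸ hb)
      have hpb : p ≠ b := fun h => (Finset.disjoint_left.1 hdCB hp) (h ▸ hb)
      have hqb' : q.1 ≠ b.1 := fun h => hqb (Fin.ext h)
      have hpb' : p.1 ≠ b.1 := fun h => hpb (Fin.ext h)
      have hcase : Btwn b q v ∨ Btwn v q u := by
        simp only [Btwn, Fin.lt_def] at h2 hbuv ⊢; omega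
      rcases hcase with hcase | hcase
      · -- q between b and v : crossing C B via p b q z0
        refine hnc C hC B hB hCB ⟨p, b, q, z0, hp, hq, hb, hz0m, ?_⟩
        rw [cyc4_iff]
        constructor <;>
          · simp only [Btwn, Fin.lt_def] at h1 h2 hbuv hcase hz0vu ⊢; omega
      · -- q between v and u : C separates u v
        refine hnsuv ⟨p, hp, q, hq, ?_⟩
        rw [cyc4_iff]
        constructor <;>
          · simp only [Btwn, Fin.lt_def] at h1 h2 hbuv hcase ⊢; omega
  · -- RelF F v Y
    rintro C hC ⟨p, hp, q, hq, hc4⟩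
    rw [cyc4_iff] at hc4
    obtain ⟨h1, h2⟩ := hc4  -- Btwn v p Y, Btwn Y q v
    have hpe : p.1 % 2 = 0 := hev C hC p hp
    have hqe : q.1 % 2 = 0 := hev C hC q hq
    by_cases hCB : C = B
    · subst hCB
      have hqb : q ≠ b := by
        intro h; subst h
        simp only [Btwn, Fin.lt_def] at h2 hbuv; omega
      have := herase q (Finset.mem_erase.2 ⟨hqb, hq⟩)
      simp only [Btwn, Fin.lt_def] at this h1 h2 hbuv; omega
    · have hCF' : C ∈ insert (B.erase b) (F.erase B) :=
        Finset.mem_insert.2 (Or.inr (Finset.mem_erase.2 ⟨hCB, hC⟩))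
      have hnsuv := huv' C hCF'
      have hdCB := hdisj C hC B hB hCB
      have hqb : q ≠ b := fun h => (Finset.disjoint_left.1 hdCB hq) (h ▸ hb)
      have hpb : p ≠ b := fun h => (Finset.disjoint_left.1 hdCB hp) (h ▸ hb)
      have hqb' : q.1 ≠ b.1 := fun h => hqb (Fin.ext h)
      have hpb' : p.1 ≠ b.1 := fun h => hpb (Fin.ext h)
      have hcase : Btwn u p b ∨ Btwn v p u := by
        simp only [Btwn, Fin.lt_def] at h1 hbuv ⊢; omega
      rcases hcase with hcase | hcase
      · -- crossing C B via p b q z0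
        refine hnc C hC B hB hCB ⟨p, b, q, z0, hp, hq, hb, hz0m, ?_⟩
        rw [cyc4_iff]
        constructor <;>
          · simp only [Btwn, Fin.lt_def] at h1 h2 hbuv hcase hz0vu ⊢; omega
      · -- C separates u v: Cyc4 u q v p
        refine hnsuv ⟨q, hq, p, hp, ?_⟩
        rw [cyc4_iff]
        constructor <;>
          · simp only [Btwn, Fin.lt_def] at h1 h2 hbuv hcase ⊢; omega

lemma merge_count {α : Type*} [DecidableEq α] (s : Finset α)
    (r r' : α → α → Prop) [DecidableRel r] [DecidableRel r']
    (hrr : ∀ a b, r a b → r' a b)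
    (hrefl : ∀ a, r a a) (hsymm : ∀ a b, r a b → r b a)
    (htrans : ∀ a b c, r a b → r b c → r a c)
    (hsymm' : ∀ a b, r' a b → r' b a)
    (htrans' : ∀ a b c, r' a b → r' b c → r' a c)
    (x y : α) (hx : x ∈ s) (hy : y ∈ s)
    (hxy' : r' x y) (hxy : ¬ r x y)
    (fiber : ∀ u v, r' u v → r u v ∨ (r u x ∧ r v y) ∨ (r u y ∧ r v x)) :
    (s.image (fun u => s.filter (fun w => r' w u))).card + 1
      = (s.image (fun u => s.filter (fun w => r w u))).card := by
  set cls : α → Finset α := fun u => s.filter (fun w => r w u) with hcls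
  set cls' : α → Finset α := fun u => s.filter (fun w => r' w u) with hcls'
  have hclseq : ∀ u v, r u v → cls u = cls v := by
    intro u v huv
    ext w
    simp only [hcls, mem_filter, and_congr_right_iff]
    exact fun _ => ⟨fun h => htrans w u v h huv, fun h => htrans w v u h (hsymm u v huv)⟩
  have hclseq' : ∀ u v, r' u v → cls' u = cls' v := by
    intro u v huv
    ext w
    simp only [hcls', mem_filter, and_congr_right_iff]
    exact fun _ => ⟨fun h => htrans' w u v h huv, fun h => htrans' w v u h (hsymm' u v huv)⟩
  have hclsx' : cls' x = cls x ∪ cls y := by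
    ext w
    simp only [hcls', hcls, mem_union, mem_filter]
    constructor
    · rintro ⟨hws, hw⟩
      rcases fiber w x hw with h | ⟨h, _⟩ | ⟨h, _⟩
      · exact Or.inl ⟨hws, h⟩
      · exact Or.inl ⟨hws, h⟩
      · exact Or.inr ⟨hws, h⟩
    · rintro (⟨hws, hw⟩ | ⟨hws, hw⟩)
      · exact ⟨hws, hrr _ _ hw⟩
      · exact ⟨hws, htrans' w y x (hrr _ _ hw) (hsymm' _ _ hxy')⟩
  have hfix : ∀ u, ¬ r' u x → cls' u = cls u := by
    intro u hu
    ext w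
    simp only [hcls', hcls, mem_filter, and_congr_right_iff]
    intro _
    constructor
    · intro hw
      rcases fiber w u hw with h | ⟨_, h⟩ | ⟨_, h⟩
      · exact h
      · exact absurd (htrans' u y x (hrr _ _ h) (hsymm' _ _ hxy')) hu
      · exact absurd (hrr _ _ h) hu
    · exact fun hw => hrr _ _ hw
  have hxmem : ∀ u, x ∈ cls u ↔ r x u := by
    intro u; simp only [hcls, mem_filter]; exact ⟨fun h => h.2, fun h => ⟨hx, h⟩⟩
  have hymem : ∀ u, y ∈ cls u ↔ r y u := by
    intro u; simp only [hcls, mem_filter]; exact ⟨fun h => h.2, fun h => ⟨hy, h⟩⟩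
  set T : Finset (Finset α) := (s.filter (fun u => ¬ r' u x)).image cls with hT
  have hxT : cls x ∉ T := by
    simp only [hT, mem_image, mem_filter, not_exists]
    rintro u ⟨⟨hus, hux⟩, hcu⟩
    have : x ∈ cls u := hcu ▸ (hxmem x).2 (hrefl x)
    exact hux (hsymm' _ _ (hrr _ _ ((hxmem u).1 this)))
  have hyT : cls y ∉ T := by
    simp only [hT, mem_image, mem_filter, not_exists]
    rintro u ⟨⟨hus, hux⟩, hcu⟩
    have : y ∈ cls u := hcu ▸ (hymem y).2 (hrefl y)
    exact hux (htrans' u y x (hsymm' _ _ (hrr _ _ ((hymem u).1 this))) (hsymm' _ _ hxy'))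
  have hxyT : cls x ∪ cls y ∉ T := by
    simp only [hT, mem_image, mem_filter, not_exists]
    rintro u ⟨⟨hus, hux⟩, hcu⟩
    have : x ∈ cls u := by
      rw [hcu]; exact mem_union_left _ ((hxmem x).2 (hrefl x))
    exact hux (hsymm' _ _ (hrr _ _ ((hxmem u).1 this)))
  have hxyne : cls x ≠ cls y := by
    intro h
    exact hxy (hsymm _ _ ((hymem x).1 (h ▸ (hymem y).2 (hrefl y))))
  have himg' : s.image cls' = insert (cls x ∪ cls y) T := by
    ext c
    simp only [mem_image, mem_insert, hT]
    constructor
    · rintro ⟨u, hus, hcu⟩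
      by_cases hux : r' u x
      · left; rw [← hcu, hclseq' u x hux, hclsx']
      · right; exact ⟨u, mem_filter.2 ⟨hus, hux⟩, by rw [← hfix u hux, hcu]⟩
    · rintro (hc | hc)
      · exact ⟨x, hx, by rw [hclsx', hc]⟩
      · obtain ⟨u, hu, hcu⟩ := hc
        have := mem_filter.1 hu
        exact ⟨u, this.1, by rw [hfix u this.2, hcu]⟩
  have himg : s.image cls = insert (cls x) (insert (cls y) T) := by
    ext c
    simp only [mem_image, mem_insert, hT]
    constructor
    · rintro ⟨u, hus, hcu⟩
      by_cases hux : r' u x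
      · rcases fiber u x hux with h | ⟨h, _⟩ | ⟨h, _⟩
        · left; rw [← hcu, hclseq u x h]
        · left; rw [← hcu, hclseq u x h]
        · right; left; rw [← hcu, hclseq u y h]
      · right; right; exact ⟨u, mem_filter.2 ⟨hus, hux⟩, hcu⟩
    · rintro (hc | hc | hc)
      · exact ⟨x, hx, hc.symm⟩
      · exact ⟨y, hy, hc.symm⟩
      · obtain ⟨u, hu, hcu⟩ := hc
        exact ⟨u, (mem_filter.1 hu).1, hcu⟩
  rw [himg, himg']
  rw [card_insert_of_notMem hxyT,
    card_insert_of_notMem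
      (show cls x ∉ insert (cls y) T by
        simp only [mem_insert, not_or]; exact ⟨hxyne, hxT⟩),
    card_insert_of_notMem hyT]

lemma fiber_full {N : ℕ} (F : Finset (Finset (Fin N)))
    (hev : ∀ C ∈ F, ∀ z ∈ C, z.1 % 2 = 0)
    (hdisj : ∀ C ∈ F, ∀ D ∈ F, C ≠ D → Disjoint C D)
    (hnc : ∀ C ∈ F, ∀ D ∈ F, C ≠ D → ¬ CrossesCyc C D)
    (B : Finset (Fin N)) (hB : B ∈ F) (b : Fin N) (hb : b ∈ B)
    (z0 : Fin N) (hz0 : z0 ∈ B.erase b)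
    (X Y : Fin N)
    (hX : X.1 + 1 = b.1 ∨ (b.1 = 0 ∧ X.1 + 1 = N))
    (hY : b.1 + 1 = Y.1)
    (u v : Fin N) (hu : u.1 % 2 = 1) (hv : v.1 % 2 = 1)
    (h' : RelF (insert (B.erase b) (F.erase B)) u v) :
    RelF F u v ∨ (RelF F u X ∧ RelF F v Y) ∨ (RelF F u Y ∧ RelF F v X) := by
  by_cases huv : RelF F u v
  · exact Or.inl huv
  have huvne : u ≠ v := by rintro rfl; exact huv (relF_refl F u)
  have huvne' : u.1 ≠ v.1 := fun h => huvne (Fin.ext h)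
  simp only [RelF, not_forall] at huv
  obtain ⟨C, hC, hsep⟩ := huv
  rw [not_not] at hsep
  by_cases hCB : C = B
  swap
  · exact absurd hsep
      (h' C (Finset.mem_insert.2 (Or.inr (Finset.mem_erase.2 ⟨hCB, hC⟩))))
  subst hCB
  obtain ⟨p, hp, q, hq, hc4⟩ := hsep
  rw [cyc4_iff] at hc4
  obtain ⟨h1, h2⟩ := hc4
  have hEF' : C.erase b ∈ insert (C.erase b) (F.erase C) := Finset.mem_insert_self _ _
  have htrich : ∀ z ∈ C.erase b, Btwn u z v ∨ Btwn v z u := by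
    intro z hz
    have hze : z.1 % 2 = 0 := hev C hC z (Finset.mem_of_mem_erase hz)
    simp only [Btwn, Fin.lt_def]; omega
  have hside : (∀ z ∈ C.erase b, Btwn v z u) ∨ (∀ z ∈ C.erase b, Btwn u z v) := by
    by_cases h1e : ∃ z ∈ C.erase b, Btwn u z v
    · obtain ⟨z1, hz1, hbz1⟩ := h1e
      right
      intro z hz
      rcases htrich z hz with h | h
      · exact h
      · exact (h' _ hEF' ⟨z1, hz1, z, hz, cyc4_iff.2 ⟨hbz1, h⟩⟩).elim
    · left
      intro z hz
      rcases htrich z hz with h | h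
      · exact absurd ⟨z, hz, h⟩ h1e
      · exact h
  rcases hside with hside | hside
  · -- B.erase b on the (v,u) side; then p must be b and Btwn u b v
    have hpb : p = b := by
      by_contra hpb
      have := hside p (Finset.mem_erase.2 ⟨hpb, hp⟩)
      simp only [Btwn, Fin.lt_def] at this h1; omega
    subst hpb
    exact Or.inr (Or.inl (fiber_core F hev hdisj hnc C hC p hp z0 hz0 X Y hX hY
      u v hu hv h' h1 hside))
  · -- symmetric: q = b and Btwn v b u
    have hqb : q = b := by
      by_contra hqb
      have := hside q (Finset.mem_erase.2 ⟨hqb, hq⟩)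
      simp only [Btwn, Fin.lt_def] at this h2; omega
    subst hqb
    have hsymmuv : RelF (insert (C.erase q) (F.erase C)) v u := relF_symm h'
    have := fiber_core F hev hdisj hnc C hC q hq z0 hz0 X Y hX hY
      v u hv hu hsymmuv h2 hside
    exact Or.inr (Or.inr ⟨this.2, this.1⟩)

lemma oddEmb_odd (m : ℕ) (i : Fin m) : (oddEmb m i).1 % 2 = 1 := by
  simp only [oddEmb]; omega

lemma main_count (m : ℕ) (hm : 0 < m) :
    ∀ (n : ℕ) (F : Finset (Finset (Fin (2*m)))),
    (∑ C ∈ F, (C.card - 1)) = n →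
    (∀ C ∈ F, ∀ z ∈ C, z.1 % 2 = 0) →
    (∀ C ∈ F, ∀ D ∈ F, C ≠ D → Disjoint C D) →
    (∀ C ∈ F, ∀ D ∈ F, C ≠ D → ¬ CrossesCyc C D) →
    (∀ C ∈ F, C.Nonempty) →
    ((univ : Finset (Fin m)).image
      (fun i => univ.filter (fun j => RelF F (oddEmb m j) (oddEmb m i)))).card = n + 1 := by
  intro n
  induction n with
  | zero =>
    intro F hsum hev hdisj hnc hne
    have hall : ∀ i j : Fin m, RelF F (oddEmb m j) (oddEmb m i) := by
      rintro i j C hC ⟨p, hp, q, hq, hc4⟩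
      have hcard : C.card = 1 := by
        have h1 := Finset.sum_eq_zero_iff.1 hsum C hC
        have h2 := Finset.card_pos.2 (hne C hC); omega
      have hpq : p = q := by
        rw [Finset.card_eq_one] at hcard; obtain ⟨a, ha⟩ := hcard
        rw [ha, Finset.mem_singleton] at hp hq; rw [hp, hq]
      rw [hpq, cyc4_iff] at hc4
      obtain ⟨hc1, hc2⟩ := hc4
      simp only [Btwn, Fin.lt_def] at hc1 hc2; omega
    have hflt : ∀ i : Fin m,
        univ.filter (fun j => RelF F (oddEmb m j) (oddEmb m i)) = univ := by
      intro i; ext j; simp [hall]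
    have : ((univ : Finset (Fin m)).image
        (fun i => univ.filter (fun j => RelF F (oddEmb m j) (oddEmb m i))))
        = {univ} := by
      ext c
      simp only [Finset.mem_image, Finset.mem_singleton]
      constructor
      · rintro ⟨i, _, hi⟩; rw [← hi, hflt]
      · rintro rfl
        exact ⟨⟨0, hm⟩, Finset.mem_univ _, hflt _⟩
    rw [this, Finset.card_singleton]
  | succ n ih =>
    intro F hsum hev hdisj hnc hne
    have hex : ∃ B ∈ F, 2 ≤ B.card := by
      by_contra h; push_neg at h
      have : ∑ C ∈ F, (C.card - 1) = 0 :=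
        Finset.sum_eq_zero (fun C hC => by have := h C hC; omega)
      omega
    obtain ⟨B, hB, hBc⟩ := hex
    obtain ⟨b, hb⟩ := hne B hB
    have hB'ne : (B.erase b).Nonempty := by
      rw [← Finset.card_pos, Finset.card_erase_of_mem hb]; omega
    obtain ⟨z0, hz0⟩ := hB'ne
    have hB'F : B.erase b ∉ F.erase B := by
      intro hmem
      have h1 := Finset.mem_erase.1 hmem
      have hd := hdisj _ h1.2 B hB h1.1
      exact (Finset.disjoint_left.1 hd hz0) (Finset.mem_of_mem_erase hz0)
    set F' := insert (B.erase b) (F.erase B) with hF'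
    have hsum' : ∑ C ∈ F', (C.card - 1) = n := by
      rw [hF', Finset.sum_insert hB'F]
      rw [← Finset.add_sum_erase F _ hB] at hsum
      have hce : (B.erase b).card = B.card - 1 := Finset.card_erase_of_mem hb
      omega
    have hev' : ∀ C ∈ F', ∀ z ∈ C, z.1 % 2 = 0 := by
      intro C hC z hz
      rcases Finset.mem_insert.1 hC with rfl | hC'
      · exact hev B hB z (Finset.mem_of_mem_erase hz)
      · exact hev C (Finset.mem_of_mem_erase hC') z hz
    have hdisj' : ∀ C ∈ F', ∀ D ∈ F', C ≠ D → Disjoint C D := by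
      intro C hC D hD hCD
      rcases Finset.mem_insert.1 hC with rfl | hC' <;>
        rcases Finset.mem_insert.1 hD with rfl | hD'
      · exact absurd rfl hCD
      · have h1 := Finset.mem_erase.1 hD'
        exact (hdisj B hB D h1.2 (Ne.symm h1.1)).mono_left (Finset.erase_subset _ _)
      · have h1 := Finset.mem_erase.1 hC'
        exact (hdisj C h1.2 B hB h1.1).mono_right (Finset.erase_subset _ _)
      · exact hdisj C (Finset.mem_of_mem_erase hC') D (Finset.mem_of_mem_erase hD') hCD
    have hcrmono : ∀ (C C' D D' : Finset (Fin (2*m))), C ⊆ C' → D ⊆ D' →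
        CrossesCyc C D → CrossesCyc C' D' := by
      rintro C C' D D' h1 h2 ⟨a, b', c, d, ha, hc, hb', hd, h4⟩
      exact ⟨a, b', c, d, h1 ha, h1 hc, h2 hb', h2 hd, h4⟩
    have hnc' : ∀ C ∈ F', ∀ D ∈ F', C ≠ D → ¬ CrossesCyc C D := by
      intro C hC D hD hCD hcr
      rcases Finset.mem_insert.1 hC with rfl | hC' <;>
        rcases Finset.mem_insert.1 hD with rfl | hD'
      · exact hCD rfl
      · have h1 := Finset.mem_erase.1 hD'
        exact hnc B hB D h1.2 (Ne.symm h1.1)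
          (hcrmono _ _ _ _ (Finset.erase_subset _ _) (le_refl _) hcr)
      · have h1 := Finset.mem_erase.1 hC'
        exact hnc C h1.2 B hB h1.1
          (hcrmono _ _ _ _ (le_refl _) (Finset.erase_subset _ _) hcr)
      · exact hnc C (Finset.mem_of_mem_erase hC') D (Finset.mem_of_mem_erase hD') hCD hcr
    have hne' : ∀ C ∈ F', C.Nonempty := by
      intro C hC
      rcases Finset.mem_insert.1 hC with rfl | hC'
      · exact ⟨z0, hz0⟩
      · exact hne C (Finset.mem_of_mem_erase hC')
    have hIH := ih F' hsum' hev' hdisj' hnc' hne'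
    -- set up merge
    have hbe : b.1 % 2 = 0 := hev B hB b hb
    have hbl : b.1 < 2*m := b.2
    set x : Fin m := ⟨(b.1/2 + m - 1) % m, Nat.mod_lt _ hm⟩ with hxdef
    set y : Fin m := ⟨b.1/2, by omega⟩ with hydef
    have hX : (oddEmb m x).1 + 1 = b.1 ∨ (b.1 = 0 ∧ (oddEmb m x).1 + 1 = 2*m) := by
      simp only [oddEmb, hxdef]
      by_cases hk0 : b.1/2 = 0
      · right
        refine ⟨by omega, ?_⟩
        rw [hk0]
        have : (0 + m - 1) % m = 0 + m - 1 := Nat.mod_eq_of_lt (by omega)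
        omega
      · left
        have h1 : b.1/2 + m - 1 = (b.1/2 - 1) + m := by omega
        rw [h1, Nat.add_mod_right, Nat.mod_eq_of_lt (by omega)]
        omega
    have hY : b.1 + 1 = (oddEmb m y).1 := by
      simp only [oddEmb, hydef]; omega
    have hz0B : z0 ∈ B := Finset.mem_of_mem_erase hz0
    have hz0e : z0.1 % 2 = 0 := hev B hB z0 hz0B
    have hz0b : z0.1 ≠ b.1 := fun h => (Finset.ne_of_mem_erase hz0) (Fin.ext h)
    have hz0l : z0.1 < 2*m := z0.2
    -- relations
    let r : Fin m → Fin m → Prop := fun a c => RelF F (oddEmb m a) (oddEmb m c)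
    let r' : Fin m → Fin m → Prop := fun a c => RelF F' (oddEmb m a) (oddEmb m c)
    have hodd : ∀ i : Fin m, (oddEmb m i).1 % 2 = 1 := oddEmb_odd m
    have hnotin : ∀ (G : Finset (Finset (Fin (2*m)))),
        (∀ C ∈ G, ∀ z ∈ C, z.1 % 2 = 0) → ∀ i : Fin m, ∀ C ∈ G, oddEmb m i ∉ C := by
      intro G hG i C hC hmem
      have := hG C hC _ hmem
      have := hodd i
      omega
    have hrr : ∀ a c, r a c → r' a c := by
      intro a c h C hC
      rcases Finset.mem_insert.1 hC with rfl | hC'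
      · intro hs
        exact h B hB (sepBy_mono (Finset.erase_subset _ _) hs)
      · exact h C (Finset.mem_of_mem_erase hC')
    have hxy' : r' x y := by
      show RelF F' (oddEmb m x) (oddEmb m y)
      rintro C hC ⟨p, hp, q, hq, hc4⟩
      rw [cyc4_iff] at hc4
      have hpb : p.1 = b.1 := by
        obtain ⟨h1, _⟩ := hc4
        simp only [Btwn, Fin.lt_def] at h1
        rcases hX with hX | hX <;> omega
      have hpb' : p = b := Fin.ext hpb
      subst hpb'
      rcases Finset.mem_insert.1 hC with rfl | hC'
      · exact (Finset.notMem_erase _ _) hp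
      · have h1 := Finset.mem_erase.1 hC'
        exact (Finset.disjoint_left.1 (hdisj C h1.2 B hB h1.1) hp) hb
    have hxy : ¬ r x y := by
      intro h
      replace h : RelF F (oddEmb m x) (oddEmb m y) := h
      refine h B hB ⟨b, hb, z0, hz0B, cyc4_iff.2 ⟨?_, ?_⟩⟩ <;>
        · simp only [Btwn, Fin.lt_def, oddEmb, hxdef, hydef]
          rcases hX with hX | hX <;>
            simp only [oddEmb, hxdef, hydef] at hX <;> omega
    have hfib : ∀ u v, r' u v → r u v ∨ (r u x ∧ r v y) ∨ (r u y ∧ r v x) :=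
      fun u v h => fiber_full F hev hdisj hnc B hB b hb z0 hz0
        (oddEmb m x) (oddEmb m y) hX hY (oddEmb m u) (oddEmb m v)
        (hodd u) (hodd v) h
    have hmc := merge_count univ r r' hrr
      (fun a => relF_refl F _)
      (fun a c h => relF_symm h)
      (fun a c d h1 h2 => relF_trans (hnotin F hev c) h1 h2)
      (fun a c h => relF_symm h)
      (fun a c d h1 h2 => relF_trans (hnotin F' hev' c) h1 h2)
      x y (mem_univ x) (mem_univ y) hxy' hxy hfib
    have hmc2 : ((univ : Finset (Fin m)).image
        (fun i => univ.filter (fun j => RelF F' (oddEmb m j) (oddEmb m i)))).card + 1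
        = ((univ : Finset (Fin m)).image
        (fun i => univ.filter (fun j => RelF F (oddEmb m j) (oddEmb m i)))).card := hmc
    omega

/-- If `P` is a noncrossing partition of an `m`-element set with `nb` blocks, then its
Kreweras complement has `m - nb + 1` blocks. -/
theorem stmt6 (m nb : ℕ) (hm : 0 < m)
    (P Q : Finpartition (univ : Finset (Fin m)))
    (hP : P.parts.card = nb)
    (hK : IsKrewerasComplement m P Q) :
    Q.parts.card = m - nb + 1 := by
  obtain ⟨hcf, hmax⟩ := hK
  set F0 := P.parts.image (Finset.image (evenEmb m)) with hF0
  have hevinj : Function.Injective (evenEmb m) := by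
    intro a c h
    simp only [evenEmb, Fin.mk.injEq, Fin.ext_iff] at h ⊢; omega
  have hoddinj : Function.Injective (oddEmb m) := by
    intro a c h
    simp only [oddEmb, Fin.mk.injEq, Fin.ext_iff] at h ⊢; omega
  have hoddv : ∀ i : Fin m, (oddEmb m i).1 % 2 = 1 := oddEmb_odd m
  -- invariants of F0
  have hev0 : ∀ C ∈ F0, ∀ z ∈ C, z.1 % 2 = 0 := by
    intro C hC z hz
    obtain ⟨A, hA, rfl⟩ := Finset.mem_image.1 hC
    obtain ⟨a, ha, rfl⟩ := Finset.mem_image.1 hz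
    simp [evenEmb, Nat.mul_mod_right]
  have hdisj0 : ∀ C ∈ F0, ∀ D ∈ F0, C ≠ D → Disjoint C D := by
    intro C hC D hD hCD
    obtain ⟨A1, hA1, rfl⟩ := Finset.mem_image.1 hC
    obtain ⟨A2, hA2, rfl⟩ := Finset.mem_image.1 hD
    have hA12 : A1 ≠ A2 := fun h => hCD (by rw [h])
    have hdA : Disjoint A1 A2 := P.disjoint hA1 hA2 hA12
    rw [Finset.disjoint_left] at hdA ⊢
    have this := hdA
    rintro a ha hb
    obtain ⟨a1, ha1, rfl⟩ := Finset.mem_image.1 ha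
    obtain ⟨a2, ha2, heq⟩ := Finset.mem_image.1 hb
    exact this ha1 (hevinj heq ▸ ha2)
  have hmemIL : ∀ C ∈ F0, C ∈ interleaved m P Q := by
    intro C hC
    exact Finset.mem_union_left _ hC
  have hnc0 : ∀ C ∈ F0, ∀ D ∈ F0, C ≠ D → ¬ CrossesCyc C D := by
    intro C hC D hD hCD
    exact hcf C (hmemIL C hC) D (hmemIL D hD) hCD
  have hne0 : ∀ C ∈ F0, C.Nonempty := by
    intro C hC
    obtain ⟨A, hA, rfl⟩ := Finset.mem_image.1 hC
    exact (P.nonempty_of_mem_parts hA).image _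
  -- sum computation
  have hnbm : P.parts.card ≤ m := by
    have h1 := P.sum_card_parts
    simp only [card_univ, Fintype.card_fin] at h1
    calc P.parts.card = ∑ _A ∈ P.parts, 1 := by rw [Finset.sum_const, smul_eq_mul, mul_one]
    _ ≤ ∑ A ∈ P.parts, A.card :=
      Finset.sum_le_sum (fun A hA => Finset.card_pos.2 (P.nonempty_of_mem_parts hA))
    _ = m := h1
  have hsum0 : ∑ C ∈ F0, (C.card - 1) = m - nb := by
    rw [hF0, Finset.sum_image (fun A hA B hB h => Finset.image_injective hevinj h)]
    have h1 : ∀ A ∈ P.parts, (A.image (evenEmb m)).card - 1 = A.card - 1 := by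
      intro A hA; rw [Finset.card_image_of_injective _ hevinj]
    rw [Finset.sum_congr rfl h1]
    have h2 : ∑ A ∈ P.parts, (A.card - 1) + ∑ _A ∈ P.parts, 1
        = ∑ A ∈ P.parts, A.card := by
      rw [← Finset.sum_add_distrib]
      exact Finset.sum_congr rfl (fun A hA => by
        have := Finset.card_pos.2 (P.nonempty_of_mem_parts hA); omega)
    have h3 := P.sum_card_parts
    simp only [card_univ, Fintype.card_fin] at h3
    rw [Finset.sum_const, smul_eq_mul, mul_one, hP] at h2
    omega
  have hmain := main_count m hm (m - nb) F0 hsum0 hev0 hdisj0 hnc0 hne0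
  -- relation facts
  have hnotin : ∀ i : Fin m, ∀ C ∈ F0, oddEmb m i ∉ C := by
    intro i C hC hmem
    have := hev0 C hC _ hmem
    have := hoddv i
    omega
  have hsymm : ∀ i j : Fin m, RelF F0 (oddEmb m i) (oddEmb m j) →
      RelF F0 (oddEmb m j) (oddEmb m i) := fun i j h => relF_symm h
  have htrans : ∀ i j k : Fin m, RelF F0 (oddEmb m i) (oddEmb m j) →
      RelF F0 (oddEmb m j) (oddEmb m k) → RelF F0 (oddEmb m i) (oddEmb m k) :=
    fun i j k h1 h2 => relF_trans (hnotin j) h1 h2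
  -- the candidate Kreweras complement from classes
  set sd : Setoid (Fin m) :=
    ⟨fun i j => RelF F0 (oddEmb m i) (oddEmb m j),
      ⟨fun i => relF_refl F0 _, fun {i j} h => hsymm i j h,
        fun {i j k} h1 h2 => htrans i j k h1 h2⟩⟩ with hsd
  letI : DecidableRel sd.r :=
    fun a c => inferInstanceAs (Decidable (RelF F0 (oddEmb m a) (oddEmb m c)))
  set QK : Finpartition (univ : Finset (Fin m)) := Finpartition.ofSetoid sd with hQK
  have hmempart : ∀ i j : Fin m, j ∈ QK.part i ↔ RelF F0 (oddEmb m i) (oddEmb m j) := by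
    intro i j
    rw [hQK, Finpartition.mem_part_ofSetoid_iff_rel]
    rfl
  -- elements of the same QK-part are related
  have hsamepart : ∀ c ∈ QK.parts, ∀ i ∈ c, ∀ j ∈ c,
      RelF F0 (oddEmb m i) (oddEmb m j) := by
    intro c hc i hi j hj
    obtain ⟨w, hw⟩ := QK.nonempty_of_mem_parts hc
    have hcp : QK.part w = c := QK.part_eq_of_mem hc hw
    rw [← hcp] at hi hj
    exact htrans i w j (hsymm w i ((hmempart w i).1 hi)) ((hmempart w j).1 hj)
  -- different QK-parts are unrelated
  have hdiffpart : ∀ c1 ∈ QK.parts, ∀ c2 ∈ QK.parts, c1 ≠ c2 →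
      ∀ i ∈ c1, ∀ j ∈ c2, ¬ RelF F0 (oddEmb m i) (oddEmb m j) := by
    intro c1 hc1 c2 hc2 hne12 i hi j hj hr
    obtain ⟨w, hw⟩ := QK.nonempty_of_mem_parts hc1
    have hcp : QK.part w = c1 := QK.part_eq_of_mem hc1 hw
    have hwj : j ∈ QK.part w := (hmempart w j).2
      (htrans w i j ((hmempart w i).1 (hcp ▸ hi)) hr)
    exact hne12 (QK.eq_of_mem_parts hc1 hc2 (hcp ▸ hwj) hj)
  -- QK is cross-free with P
  have hQKfree : CrossFreeCyc (interleaved m P QK) := by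
    intro B1 hB1 B2 hB2 hne12 hcr
    obtain ⟨a, bb, cc, d, ha, hc, hbb, hd, h4⟩ := hcr
    rcases Finset.mem_union.1 hB1 with h1 | h1 <;> rcases Finset.mem_union.1 hB2 with h2 | h2
    · -- even, even : crosses in original interleaved
      exact hcf B1 (Finset.mem_union_left _ h1) B2 (Finset.mem_union_left _ h2) hne12
        ⟨a, bb, cc, d, ha, hc, hbb, hd, h4⟩
    · -- even, odd
      obtain ⟨c2, hc2, rfl⟩ := Finset.mem_image.1 h2
      obtain ⟨b', hb', rfl⟩ := Finset.mem_image.1 hbb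
      obtain ⟨d', hd', rfl⟩ := Finset.mem_image.1 hd
      exact hsamepart c2 hc2 b' hb' d' hd' B1 h1 ⟨cc, hc, a, ha, cyc4_rot h4⟩
    · -- odd, even
      obtain ⟨c1, hc1, rfl⟩ := Finset.mem_image.1 h1
      obtain ⟨a', ha', rfl⟩ := Finset.mem_image.1 ha
      obtain ⟨c', hc', rfl⟩ := Finset.mem_image.1 hc
      exact hsamepart c1 hc1 a' ha' c' hc' B2 h2 ⟨bb, hbb, d, hd, h4⟩
    · -- odd, odd
      obtain ⟨c1, hc1, rfl⟩ := Finset.mem_image.1 h1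
      obtain ⟨c2, hc2, rfl⟩ := Finset.mem_image.1 h2
      have hc12 : c1 ≠ c2 := fun h => hne12 (by rw [h])
      obtain ⟨a', ha', rfl⟩ := Finset.mem_image.1 ha
      obtain ⟨c', hc', rfl⟩ := Finset.mem_image.1 hc
      obtain ⟨b', hb', rfl⟩ := Finset.mem_image.1 hbb
      obtain ⟨d', hd', rfl⟩ := Finset.mem_image.1 hd
      have hnab : ¬ RelF F0 (oddEmb m a') (oddEmb m b') :=
        hdiffpart c1 hc1 c2 hc2 hc12 a' ha' b' hb'
      simp only [RelF, not_forall, not_not] at hnab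
      obtain ⟨E, hE, hsep⟩ := hnab
      rcases sepBy_propagate (hev0 E hE) (hoddv c') (hoddv d') h4 hsep with hs | hs
      · exact hsamepart c1 hc1 a' ha' c' hc' E hE hs
      · exact hsamepart c2 hc2 b' hb' d' hd' E hE hs
  -- identification of the parts of Q
  have hQpart : ∀ i : Fin m,
      Q.part i = univ.filter (fun j => RelF F0 (oddEmb m j) (oddEmb m i)) := by
    intro i
    ext j
    simp only [Finset.mem_filter, Finset.mem_univ, true_and]
    constructor
    · intro hj C hC hsep
      obtain ⟨p, hp, q, hq, h4⟩ := hsep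
      have hQpmem : Q.part i ∈ Q.parts := Q.part_mem.2 (Finset.mem_univ i)
      have hoddIL : (Q.part i).image (oddEmb m) ∈ interleaved m P Q :=
        Finset.mem_union_right _ (Finset.mem_image_of_mem _ hQpmem)
      have hCIL : C ∈ interleaved m P Q := hmemIL C hC
      have hneq : (Q.part i).image (oddEmb m) ≠ C := by
        intro h
        have : oddEmb m i ∈ C := h ▸ Finset.mem_image_of_mem _ (Q.mem_part (Finset.mem_univ i))
        exact hnotin i C hC this
      exact hcf _ hoddIL C hCIL hneq
        ⟨oddEmb m j, p, oddEmb m i, q, Finset.mem_image_of_mem _ hj,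
          Finset.mem_image_of_mem _ (Q.mem_part (Finset.mem_univ i)), hp, hq, h4⟩
    · intro hr
      have hjQK : j ∈ QK.part i := (hmempart i j).2 (hsymm j i hr)
      obtain ⟨c', hc', hsub⟩ := hmax QK hQKfree (QK.part i) (QK.part_mem.2 (Finset.mem_univ i))
      have hic' : i ∈ c' := hsub (QK.mem_part (Finset.mem_univ i))
      have : Q.part i = c' := Q.part_eq_of_mem hc' hic'
      rw [this]
      exact hsub hjQK
  have hparts : Q.parts = univ.image (fun i => Q.part i) := by
    ext c
    simp only [Finset.mem_image]
    constructor
    · intro hc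
      obtain ⟨w, hw⟩ := Q.nonempty_of_mem_parts hc
      exact ⟨w, Finset.mem_univ w, Q.part_eq_of_mem hc hw⟩
    · rintro ⟨i, _, rfl⟩
      exact Q.part_mem.2 (Finset.mem_univ i)
  rw [hparts]
  have : (fun i => Q.part i)
      = fun i => univ.filter (fun j => RelF F0 (oddEmb m j) (oddEmb m i)) :=
    funext hQpart
  rw [this]
  exact hmain
end

section
/- A noncrossing partition P of {1,...,2n} is monochromatic with respect to the alternating 2-coloring (odd positions one color, even positions the other) if and only if its Kreweras complement K(P) is 2-divisible (every block of K(P) has even cardinality). -/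
open Finset

-- AUX

lemma modcase (x N : ℕ) (hN : 0 < N) (h : x < 2*N) :
    (x % N = x ∧ x < N) ∨ (x % N = x - N ∧ N ≤ x) := by
  rcases Nat.lt_or_ge x N with h' | h'
  · exact Or.inl ⟨Nat.mod_eq_of_lt h', h'⟩
  · refine Or.inr ⟨?_, h'⟩
    rw [Nat.mod_eq_sub_mod h', Nat.mod_eq_of_lt (by omega)]

/-- cyclic distance from `i` to `x` on `Z/m`. -/
def ddm (m i x : ℕ) : ℕ := (x + m - i) % m

lemma cyc4_ne {N} {a b c d : Fin N} (h : Cyc4 a b c d) : b ≠ d ∧ a ≠ c := by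
  simp only [Cyc4, Fin.lt_def] at h
  constructor <;> rintro rfl <;> omega

lemma no_cross_right_singleton {N} (F : Finset (Fin N)) (x : Fin N) :
    ¬ CrossesCyc F {x} := by
  rintro ⟨a, b, c, d, _, _, hb, hd, h4⟩
  simp only [mem_singleton] at hb hd
  subst hb; subst hd
  exact (cyc4_ne h4).1 rfl

lemma no_cross_left_singleton {N} (F : Finset (Fin N)) (x : Fin N) :
    ¬ CrossesCyc {x} F := by
  rintro ⟨a, b, c, d, ha, hc, _, _, h4⟩
  simp only [mem_singleton] at ha hc
  subst ha; subst hc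
  exact (cyc4_ne h4).2 rfl

lemma memE {n : ℕ} {P Q : Finpartition (univ : Finset (Fin (2*n)))} {B}
    (hB : B ∈ P.parts) : B.image (evenEmb (2*n)) ∈ interleaved (2*n) P Q :=
  mem_union_left _ (mem_image_of_mem _ hB)

lemma memO {n : ℕ} {P Q : Finpartition (univ : Finset (Fin (2*n)))} {C}
    (hC : C ∈ Q.parts) : C.image (oddEmb (2*n)) ∈ interleaved (2*n) P Q :=
  mem_union_right _ (mem_image_of_mem _ hC)

lemma imgE_ne_imgO {m : ℕ} {B C : Finset (Fin m)} (hB : B.Nonempty) :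
    B.image (evenEmb m) ≠ C.image (oddEmb m) := by
  obtain ⟨x, hx⟩ := hB
  intro h
  have h1 : evenEmb m x ∈ C.image (oddEmb m) := h ▸ mem_image_of_mem _ hx
  obtain ⟨y, -, hy⟩ := mem_image.1 h1
  have := congrArg Fin.val hy
  simp only [evenEmb, oddEmb] at this
  omega

lemma evenEmb_inj {m : ℕ} : Function.Injective (evenEmb m) := by
  intro a b hab
  have := congrArg Fin.val hab
  simp only [evenEmb] at this
  exact Fin.ext (by omega)

lemma imgE_ne {m : ℕ} {B B' : Finset (Fin m)} (h : B ≠ B') :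
    B.image (evenEmb m) ≠ B'.image (evenEmb m) :=
  fun he => h (Finset.image_injective evenEmb_inj he)

-- crossing constructions

lemma cyc4_OEOE {m : ℕ} (hm : 0 < m) (i x j y : Fin m)
    (h1 : ddm m (i.1+1) x.1 < ddm m i.1 j.1)
    (h2 : ddm m i.1 j.1 ≤ ddm m (i.1+1) y.1) :
    Cyc4 (oddEmb m i) (evenEmb m x) (oddEmb m j) (evenEmb m y) := by
  have hi := i.2; have hx := x.2; have hj := j.2; have hy := y.2
  simp only [ddm] at h1 h2
  have c1 := modcase (x.1 + m - (i.1+1)) m hm (by omega)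
  have c2 := modcase (j.1 + m - i.1) m hm (by omega)
  have c3 := modcase (y.1 + m - (i.1+1)) m hm (by omega)
  simp only [Cyc4, Fin.lt_def, oddEmb, evenEmb]
  omega

lemma cyc4_EOEO {m : ℕ} (hm : 0 < m) (a c b d : Fin m)
    (h1 : ddm m a.1 c.1 < ddm m a.1 b.1)
    (h2 : ddm m a.1 b.1 ≤ ddm m a.1 d.1) :
    Cyc4 (evenEmb m a) (oddEmb m c) (evenEmb m b) (oddEmb m d) := by
  have ha := a.2; have hc := c.2; have hb := b.2; have hd := d.2
  simp only [ddm] at h1 h2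
  have c1 := modcase (c.1 + m - a.1) m hm (by omega)
  have c2 := modcase (b.1 + m - a.1) m hm (by omega)
  have c3 := modcase (d.1 + m - a.1) m hm (by omega)
  simp only [Cyc4, Fin.lt_def, oddEmb, evenEmb]
  omega

lemma cyc4_EEEE {m : ℕ} (hm : 0 < m) (a c b d : Fin m)
    (h1 : 0 < ddm m a.1 c.1)
    (h2 : ddm m a.1 c.1 < ddm m a.1 b.1)
    (h3 : ddm m a.1 b.1 < ddm m a.1 d.1) :
    Cyc4 (evenEmb m a) (evenEmb m c) (evenEmb m b) (evenEmb m d) := by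
  have ha := a.2; have hc := c.2; have hb := b.2; have hd := d.2
  simp only [ddm] at h1 h2 h3
  have c1 := modcase (c.1 + m - a.1) m hm (by omega)
  have c2 := modcase (b.1 + m - a.1) m hm (by omega)
  have c3 := modcase (d.1 + m - a.1) m hm (by omega)
  simp only [Cyc4, Fin.lt_def, evenEmb]
  omega

-- crossing destructions

lemma sep_of_cyc4_EOEO {m : ℕ} (hm : 0 < m) (x i y k : Fin m)
    (h : Cyc4 (evenEmb m x) (oddEmb m i) (evenEmb m y) (oddEmb m k)) :
    ddm m (i.1+1) y.1 < ddm m i.1 k.1 ∧ ddm m (k.1+1) x.1 < ddm m k.1 i.1 := by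
  have hi := i.2; have hx := x.2; have hk := k.2; have hy := y.2
  simp only [Cyc4, Fin.lt_def, oddEmb, evenEmb] at h
  simp only [ddm]
  have c1 := modcase (y.1 + m - (i.1+1)) m hm (by omega)
  have c2 := modcase (k.1 + m - i.1) m hm (by omega)
  have c3 := modcase (x.1 + m - (k.1+1)) m hm (by omega)
  have c4 := modcase (i.1 + m - k.1) m hm (by omega)
  omega

lemma sep_of_cyc4_OEOE {m : ℕ} (hm : 0 < m) (i x k y : Fin m)
    (h : Cyc4 (oddEmb m i) (evenEmb m x) (oddEmb m k) (evenEmb m y)) :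
    ddm m (i.1+1) x.1 < ddm m i.1 k.1 ∧ ddm m (k.1+1) y.1 < ddm m k.1 i.1 := by
  have hi := i.2; have hx := x.2; have hk := k.2; have hy := y.2
  simp only [Cyc4, Fin.lt_def, oddEmb, evenEmb] at h
  simp only [ddm]
  have c1 := modcase (x.1 + m - (i.1+1)) m hm (by omega)
  have c2 := modcase (k.1 + m - i.1) m hm (by omega)
  have c3 := modcase (y.1 + m - (k.1+1)) m hm (by omega)
  have c4 := modcase (i.1 + m - k.1) m hm (by omega)
  omega


section Main

variable {n : ℕ} {P Q : Finpartition (univ : Finset (Fin (2*n)))}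

lemma sepQ_false (hn : 0 < n)
    (hcf : CrossFreeCyc (interleaved (2*n) P Q))
    {B C} (hB : B ∈ P.parts) (hC : C ∈ Q.parts)
    {i j x y : Fin (2*n)} (hi : i ∈ C) (hj : j ∈ C) (hx : x ∈ B) (hy : y ∈ B)
    (h1 : ddm (2*n) (i.1+1) x.1 < ddm (2*n) i.1 j.1)
    (h2 : ddm (2*n) i.1 j.1 ≤ ddm (2*n) (i.1+1) y.1) : False := by
  refine hcf _ (memO hC) _ (memE hB) (Ne.symm (imgE_ne_imgO ⟨x, hx⟩)) ?_
  exact ⟨oddEmb _ i, evenEmb _ x, oddEmb _ j, evenEmb _ y,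
    mem_image_of_mem _ hi, mem_image_of_mem _ hj,
    mem_image_of_mem _ hx, mem_image_of_mem _ hy,
    cyc4_OEOE (by omega) i x j y h1 h2⟩

lemma sepPQ_false (hn : 0 < n)
    (hcf : CrossFreeCyc (interleaved (2*n) P Q))
    {B C} (hB : B ∈ P.parts) (hC : C ∈ Q.parts)
    {a b c d : Fin (2*n)} (ha : a ∈ B) (hb : b ∈ B) (hc : c ∈ C) (hd : d ∈ C)
    (h1 : ddm (2*n) a.1 c.1 < ddm (2*n) a.1 b.1)
    (h2 : ddm (2*n) a.1 b.1 ≤ ddm (2*n) a.1 d.1) : False := by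
  refine hcf _ (memE hB) _ (memO hC) (imgE_ne_imgO ⟨a, ha⟩) ?_
  exact ⟨evenEmb _ a, oddEmb _ c, evenEmb _ b, oddEmb _ d,
    mem_image_of_mem _ ha, mem_image_of_mem _ hb,
    mem_image_of_mem _ hc, mem_image_of_mem _ hd,
    cyc4_EOEO (by omega) a c b d h1 h2⟩

lemma sepPP_false (hn : 0 < n)
    (hcf : CrossFreeCyc (interleaved (2*n) P Q))
    {B B'} (hB : B ∈ P.parts) (hB' : B' ∈ P.parts) (hne : B ≠ B')
    {a b c d : Fin (2*n)} (ha : a ∈ B) (hb : b ∈ B) (hc : c ∈ B') (hd : d ∈ B')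
    (h1 : 0 < ddm (2*n) a.1 c.1)
    (h2 : ddm (2*n) a.1 c.1 < ddm (2*n) a.1 b.1)
    (h3 : ddm (2*n) a.1 b.1 < ddm (2*n) a.1 d.1) : False := by
  refine hcf _ (memE hB) _ (memE hB') (imgE_ne hne) ?_
  exact ⟨evenEmb _ a, evenEmb _ c, evenEmb _ b, evenEmb _ d,
    mem_image_of_mem _ ha, mem_image_of_mem _ hb,
    mem_image_of_mem _ hc, mem_image_of_mem _ hd,
    cyc4_EEEE (by omega) a c b d h1 h2 h3⟩

/-- If no block of `P` separates `i'` from `k'` on the cycle, then `i` and `k`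
lie in a common block of the Kreweras complement `Q`. -/
lemma pair_mem (hn : 0 < n) (hK : IsKrewerasComplement (2*n) P Q) (i k : Fin (2*n))
    (hsep : ∀ B ∈ P.parts, ¬ ((∃ x ∈ B, ddm (2*n) (i.1+1) x.1 < ddm (2*n) i.1 k.1) ∧
        (∃ y ∈ B, ddm (2*n) (k.1+1) y.1 < ddm (2*n) k.1 i.1))) :
    ∃ C ∈ Q.parts, i ∈ C ∧ k ∈ C := by
  rcases eq_or_ne i k with rfl | hik
  · obtain ⟨C, hC, hiC⟩ := Q.exists_mem (mem_univ i)
    exact ⟨C, hC, hiC, hiC⟩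
  classical
  set s : Setoid (Fin (2*n)) :=
    ⟨fun x y => x = y ∨ (x = i ∧ y = k) ∨ (x = k ∧ y = i), by
      constructor
      · intro x; exact Or.inl rfl
      · intro x y h; tauto
      · intro x y z h1 h2
        rcases h1 with rfl | ⟨rfl, rfl⟩ | ⟨rfl, rfl⟩ <;>
          rcases h2 with rfl | ⟨h2a, rfl⟩ | ⟨h2a, rfl⟩ <;> tauto⟩ with hs
  letI : DecidableRel s.r := fun x y => Classical.dec _
  set Q' := Finpartition.ofSetoid s with hQ'
  have hparts : ∀ b ∈ Q'.parts, b = {i, k} ∨ ∃ x, b = {x} := by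
    intro b hb
    rw [hQ', Finpartition.ofSetoid, Finpartition.ofSetSetoid_parts] at hb
    simp only [Finset.mem_image, mem_univ, true_and] at hb
    obtain ⟨a, ha⟩ := hb
    have hmem : ∀ z, z ∈ b ↔ (a = z ∨ (a = i ∧ z = k) ∨ (a = k ∧ z = i)) := by
      intro z; rw [← ha]; simp only [Finset.mem_filter, mem_univ, true_and]; rfl
    rcases eq_or_ne a i with rfl | hai
    · left; ext z; rw [hmem z]
      simp only [Finset.mem_insert, mem_singleton]
      constructor
      · rintro (rfl | ⟨-, rfl⟩ | ⟨rfl, rfl⟩) <;> tauto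
      · rintro (rfl | rfl) <;> tauto
    rcases eq_or_ne a k with rfl | hak
    · left; ext z; rw [hmem z]
      simp only [Finset.mem_insert, mem_singleton]
      constructor
      · rintro (rfl | ⟨rfl, rfl⟩ | ⟨-, rfl⟩) <;> tauto
      · rintro (rfl | rfl) <;> tauto
    · right; refine ⟨a, ?_⟩; ext z; rw [hmem z]
      simp only [mem_singleton]
      constructor
      · rintro (rfl | ⟨rfl, rfl⟩ | ⟨rfl, rfl⟩) <;> tauto
      · rintro rfl; tauto
  have hik' : ({i, k} : Finset (Fin (2*n))).Nonempty := ⟨i, by simp⟩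
  have hcf' : CrossFreeCyc (interleaved (2*n) P Q') := by
    intro F1 hF1 F2 hF2 hne hcross
    rw [interleaved, Finset.mem_union] at hF1 hF2
    rcases hF1 with h1 | h1 <;> rcases hF2 with h2 | h2
    · obtain ⟨B1, hB1, rfl⟩ := Finset.mem_image.1 h1
      obtain ⟨B2, hB2, rfl⟩ := Finset.mem_image.1 h2
      exact hK.1 _ (memE hB1) _ (memE hB2) hne hcross
    · obtain ⟨B, hB, rfl⟩ := Finset.mem_image.1 h1
      obtain ⟨b, hb, rfl⟩ := Finset.mem_image.1 h2
      rcases hparts b hb with rfl | ⟨x, rfl⟩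
      swap
      · rw [Finset.image_singleton] at hcross
        exact no_cross_right_singleton _ _ hcross
      · obtain ⟨a, b', c, d, haF, hcF, hbF, hdF, h4⟩ := hcross
        obtain ⟨x, hx, rfl⟩ := Finset.mem_image.1 haF
        obtain ⟨y, hy, rfl⟩ := Finset.mem_image.1 hcF
        obtain ⟨u, hu, rfl⟩ := Finset.mem_image.1 hbF
        obtain ⟨v, hv, rfl⟩ := Finset.mem_image.1 hdF
        simp only [Finset.mem_insert, mem_singleton] at hu hv
        have hbd := (cyc4_ne h4).1
        rcases hu with rfl | rfl <;> rcases hv with rfl | rfl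
        · exact hbd rfl
        · obtain ⟨hsy, hsx⟩ := sep_of_cyc4_EOEO (by omega) x u y v h4
          exact hsep B hB ⟨⟨y, hy, hsy⟩, ⟨x, hx, hsx⟩⟩
        · obtain ⟨hsy, hsx⟩ := sep_of_cyc4_EOEO (by omega) x u y v h4
          exact hsep B hB ⟨⟨x, hx, hsx⟩, ⟨y, hy, hsy⟩⟩
        · exact hbd rfl
    · obtain ⟨b, hb, rfl⟩ := Finset.mem_image.1 h1
      obtain ⟨B, hB, rfl⟩ := Finset.mem_image.1 h2
      rcases hparts b hb with rfl | ⟨x, rfl⟩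
      swap
      · rw [Finset.image_singleton] at hcross
        exact no_cross_left_singleton _ _ hcross
      · obtain ⟨a, b', c, d, haF, hcF, hbF, hdF, h4⟩ := hcross
        obtain ⟨u, hu, rfl⟩ := Finset.mem_image.1 haF
        obtain ⟨v, hv, rfl⟩ := Finset.mem_image.1 hcF
        obtain ⟨x, hx, rfl⟩ := Finset.mem_image.1 hbF
        obtain ⟨y, hy, rfl⟩ := Finset.mem_image.1 hdF
        simp only [Finset.mem_insert, mem_singleton] at hu hv
        have hac := (cyc4_ne h4).2
        rcases hu with rfl | rfl <;> rcases hv with rfl | rfl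
        · exact hac rfl
        · obtain ⟨hsx, hsy⟩ := sep_of_cyc4_OEOE (by omega) u x v y h4
          exact hsep B hB ⟨⟨x, hx, hsx⟩, ⟨y, hy, hsy⟩⟩
        · obtain ⟨hsx, hsy⟩ := sep_of_cyc4_OEOE (by omega) u x v y h4
          exact hsep B hB ⟨⟨y, hy, hsy⟩, ⟨x, hx, hsx⟩⟩
        · exact hac rfl
    · obtain ⟨b1, hb1, rfl⟩ := Finset.mem_image.1 h1
      obtain ⟨b2, hb2, rfl⟩ := Finset.mem_image.1 h2
      rcases hparts b1 hb1 with rfl | ⟨x, rfl⟩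
      · rcases hparts b2 hb2 with rfl | ⟨y, rfl⟩
        · exact hne rfl
        · rw [Finset.image_singleton] at hcross
          exact no_cross_right_singleton _ _ hcross
      · rw [Finset.image_singleton] at hcross
        exact no_cross_left_singleton _ _ hcross
  obtain ⟨C, hC, hsubC⟩ := hK.2 Q' hcf' (Q'.part i) (Q'.part_mem.2 (mem_univ i))
  refine ⟨C, hC, hsubC (Q'.mem_part (mem_univ i)), hsubC ?_⟩
  rw [hQ']
  exact (Finpartition.mem_part_ofSetoid_iff_rel).2 (Or.inr (Or.inl ⟨rfl, rfl⟩))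

/-- Window lemma: if `i'` and `j'` lie in the same block of the Kreweras complement `Q`
with no element of that block strictly between them (going from `i'` to `j'`), and `P`
is monochromatic, then the number of unprimed elements strictly between `i'` and `j'`
is odd. -/
lemma window_odd (hn : 0 < n) (hK : IsKrewerasComplement (2*n) P Q) (hM : Mono P)
    {C} (hC : C ∈ Q.parts) {i j : Fin (2*n)} (hi : i ∈ C) (hj : j ∈ C)
    {g : ℕ} (hg : g = (j.1 + 2*n - i.1 - 1) % (2*n) + 1)
    (hcons : ∀ k : Fin (2*n), k ∈ C → ¬(0 < ddm (2*n) i.1 k.1 ∧ ddm (2*n) i.1 k.1 < g)) :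
    Odd g := by
  classical
  have hm0 : 0 < 2*n := by omega
  have hi2 := i.2
  have hj2 := j.2
  have hg1 : 0 < g := by omega
  have hgm : g ≤ 2*n := by
    have := Nat.mod_lt (j.1 + 2*n - i.1 - 1) hm0
    omega
  have hgj : (i = j ∧ g = 2*n) ∨ (i ≠ j ∧ g = ddm (2*n) i.1 j.1) := by
    rcases eq_or_ne i j with rfl | hij
    · left
      refine ⟨rfl, ?_⟩
      have h2 : (i.1 + 2*n - i.1 - 1) = 2*n - 1 := by omega
      rw [hg, h2, Nat.mod_eq_of_lt (by omega)]
      omega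
    · right
      refine ⟨hij, ?_⟩
      have hne : i.1 ≠ j.1 := fun h => hij (Fin.ext h)
      have c1 := modcase (j.1 + 2*n - i.1 - 1) (2*n) hm0 (by omega)
      have c2 := modcase (j.1 + 2*n - i.1) (2*n) hm0 (by omega)
      rw [hg]
      unfold ddm
      omega
  set w : ℕ → Fin (2*n) := fun t => ⟨(i.1 + 1 + t) % (2*n), Nat.mod_lt _ hm0⟩ with hww
  have hwv : ∀ t, (w t).1 = (i.1 + 1 + t) % (2*n) := fun t => rfl
  have hwdd : ∀ t, t + 1 < 2*n → ddm (2*n) i.1 (w t).1 = t + 1 := by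
    intro t ht
    unfold ddm
    rw [hwv]
    have c1 := modcase (i.1 + 1 + t) (2*n) hm0 (by omega)
    have hb : (i.1 + 1 + t) % (2*n) < 2*n := Nat.mod_lt _ hm0
    have c2 := modcase ((i.1 + 1 + t) % (2*n) + 2*n - i.1) (2*n) hm0 (by omega)
    omega
  have hwdd0 : ∀ t, t < 2*n → ddm (2*n) (w 0).1 (w t).1 = t := by
    intro t ht
    unfold ddm
    rw [hwv, hwv]
    have c1 := modcase (i.1 + 1 + t) (2*n) hm0 (by omega)
    have c0 := modcase (i.1 + 1 + 0) (2*n) hm0 (by omega)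
    have hb : (i.1 + 1 + t) % (2*n) < 2*n := Nat.mod_lt _ hm0
    have hb0 : (i.1 + 1 + 0) % (2*n) < 2*n := Nat.mod_lt _ hm0
    have c2 := modcase ((i.1 + 1 + t) % (2*n) + 2*n - (i.1 + 1 + 0) % (2*n)) (2*n) hm0 (by omega)
    omega
  have hcoord : ∀ x : Fin (2*n), ∃ t, t < 2*n ∧ w t = x ∧ ddm (2*n) (i.1+1) x.1 = t := by
    intro x
    have hx2 := x.2
    refine ⟨ddm (2*n) (i.1+1) x.1, Nat.mod_lt _ hm0, ?_, rfl⟩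
    apply Fin.ext
    rw [hwv]
    unfold ddm
    have c1 := modcase (x.1 + 2*n - (i.1+1)) (2*n) hm0 (by omega)
    have hb : (x.1 + 2*n - (i.1+1)) % (2*n) < 2*n := Nat.mod_lt _ hm0
    have c2 := modcase (i.1 + 1 + (x.1 + 2*n - (i.1+1)) % (2*n)) (2*n) hm0 (by omega)
    omega
  obtain ⟨B₀, hB₀, hw0⟩ := P.exists_mem (mem_univ (w 0))
  have hlast : w (g-1) ∈ B₀ := by
    by_contra hnolast
    set S := (Finset.range g).filter (fun t => w t ∈ B₀) with hS
    have hS0 : 0 ∈ S := Finset.mem_filter.2 ⟨Finset.mem_range.2 hg1, hw0⟩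
    have hSne : S.Nonempty := ⟨0, hS0⟩
    set t₀ := S.max' hSne with ht₀
    have ht₀S := S.max'_mem hSne
    have ht₀g : t₀ < g := Finset.mem_range.1 (Finset.mem_filter.1 ht₀S).1
    have hwt₀ : w t₀ ∈ B₀ := (Finset.mem_filter.1 ht₀S).2
    have ht₀ne : t₀ ≠ g - 1 := fun h => hnolast (h ▸ hwt₀)
    have ht₀lt : t₀ + 1 < g := by omega
    set k := w t₀ with hk
    have hddik : ddm (2*n) i.1 k.1 = t₀ + 1 := hwdd t₀ (by omega)
    have hkC : k ∉ C := by
      intro hkC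
      exact hcons k hkC ⟨by omega, by omega⟩
    have hsepex : ¬ ∀ B ∈ P.parts, ¬ ((∃ x ∈ B, ddm (2*n) (i.1+1) x.1 < ddm (2*n) i.1 k.1) ∧
        (∃ y ∈ B, ddm (2*n) (k.1+1) y.1 < ddm (2*n) k.1 i.1)) := by
      intro hs
      obtain ⟨C', hC', hiC', hkC'⟩ := pair_mem hn hK i k hs
      exact hkC (Q.eq_of_mem_parts hC' hC hiC' hi ▸ hkC')
    push_neg at hsepex
    obtain ⟨B, hB, ⟨x, hx, hsx⟩, ⟨y, hy, hsy⟩⟩ := hsepex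
    obtain ⟨u, hum, hwu, hu⟩ := hcoord x
    obtain ⟨v, hvm, hwv', hv⟩ := hcoord y
    have hut : u ≤ t₀ := by omega
    have hky : k.1 = (i.1+1+t₀) % (2*n) := rfl
    have hyv : y.1 = (i.1+1+v) % (2*n) := (congrArg Fin.val hwv').symm
    have hvt : t₀ < v := by
      unfold ddm at hsy
      have hy2 := y.2
      have hk2 := k.2
      have c1 := modcase (i.1+1+t₀) (2*n) hm0 (by omega)
      have c2 := modcase (i.1+1+v) (2*n) hm0 (by omega)
      have c3 := modcase (y.1 + 2*n - (k.1+1)) (2*n) hm0 (by omega)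
      have c4 := modcase (i.1 + 2*n - k.1) (2*n) hm0 (by omega)
      omega
    have hvg : v < g := by
      by_contra hge
      rcases hgj with ⟨rfl, hgm'⟩ | ⟨hij, hgj'⟩
      · omega
      · exact sepQ_false hn hK.1 hB hC hi hj hx hy (by omega) (by omega)
    rcases eq_or_ne B B₀ with rfl | hBB
    · have hvS : v ∈ S := Finset.mem_filter.2 ⟨Finset.mem_range.2 hvg, by rw [hwv']; exact hy⟩
      have := S.le_max' v hvS
      omega
    · have hxk : u ≠ t₀ := by
        intro h
        exact hBB (P.eq_of_mem_parts hB hB₀ hx (by rw [← hwu, h]; exact hwt₀))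
      have hu0 : u ≠ 0 := by
        intro h
        exact hBB (P.eq_of_mem_parts hB hB₀ hx (by rw [← hwu, h]; exact hw0))
      refine sepPP_false hn hK.1 hB₀ hB (Ne.symm hBB) hw0 hwt₀
        (by rw [← hwu] at hx; exact hx) (by rw [← hwv'] at hy; exact hy) ?_ ?_ ?_
      · rw [hwdd0 u hum]; omega
      · rw [hwdd0 u hum, hwdd0 t₀ (by omega)]; omega
      · rw [hwdd0 t₀ (by omega), hwdd0 v hvm]; omega
  have hv0 := hwv 0
  have hvg1 := hwv (g-1)
  have harg : i.1 + 1 + (g-1) = i.1 + g := by omega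
  rw [harg] at hvg1
  have c1 := modcase (i.1 + 1 + 0) (2*n) hm0 (by omega)
  have c2 := modcase (i.1 + g) (2*n) hm0 (by omega)
  rw [Nat.odd_iff]
  rcases hM B₀ hB₀ with hpar | hpar
  · have h1 := hpar _ hw0
    have h2 := hpar _ hlast
    rw [Nat.even_iff] at h1 h2
    omega
  · have h1 := hpar _ hw0
    have h2 := hpar _ hlast
    rw [Nat.odd_iff] at h1 h2
    omega

lemma forward_even (hn : 0 < n) (hK : IsKrewerasComplement (2*n) P Q) (hM : Mono P)
    {C} (hC : C ∈ Q.parts) : Even C.card := by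
  classical
  have hm0 : 0 < 2*n := by omega
  set r := C.card with hr
  have hrpos : 0 < r := Finset.card_pos.2 (Q.nonempty_of_mem_parts hC)
  have hrr : C.card = r := rfl
  set e := C.orderIsoOfFin hrr with he
  set v : ℕ → ℕ := fun s => if h : s < r then ((e ⟨s, h⟩ : C) : Fin (2*n)).1 else 0 with hv
  have hvlt : ∀ s, s < r → v s < 2*n := by
    intro s h
    simp only [hv]
    rw [dif_pos h]
    exact ((e ⟨s, h⟩ : C) : Fin (2*n)).2
  have hvdef : ∀ s (h : s < r), v s = ((e ⟨s, h⟩ : C) : Fin (2*n)).1 := by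
    intro s h
    simp only [hv]
    rw [dif_pos h]
  have hmono : ∀ s t, s < t → t < r → v s < v t := by
    intro s t hst ht
    rw [hvdef s (by omega), hvdef t ht]
    have : (⟨s, by omega⟩ : Fin r) < ⟨t, ht⟩ := by
      rw [Fin.lt_def]; exact hst
    have h2 := e.strictMono this
    exact h2
  have hwmono : ∀ s t, s ≤ t → t < r → v s ≤ v t := by
    intro s t hst ht
    rcases Nat.lt_or_ge s t with h | h
    · exact le_of_lt (hmono s t h ht)
    · have : s = t := by omega
      rw [this]
  have hmemC : ∀ s (h : s < r), ((e ⟨s, h⟩ : C) : Fin (2*n)) ∈ C := fun s h => (e ⟨s, h⟩).2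
  have hsurj : ∀ k : Fin (2*n), k ∈ C → ∃ u, ∃ hu : u < r, v u = k.1 := by
    intro k hk
    obtain ⟨t, ht⟩ := e.surjective ⟨k, hk⟩
    refine ⟨t.1, t.2, ?_⟩
    rw [hvdef t.1 t.2]
    have h2 : (⟨t.1, t.2⟩ : Fin r) = t := rfl
    rw [h2, ht]
  set G : ℕ → ℕ := fun s => if s + 1 < r then v (s+1) - v s else v 0 + 2*n - v s with hG
  have ga : ∀ s, s < r → Odd (G s) := by
    intro s hs
    rcases Nat.lt_or_ge (s+1) r with hA | hB
    · -- consecutive pair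
      have hGs : G s = v (s+1) - v s := by simp only [hG]; rw [if_pos hA]
      have hlt : v s < v (s+1) := hmono s (s+1) (by omega) hA
      have hv1 := hvlt s (by omega)
      have hv2 := hvlt (s+1) hA
      refine window_odd hn hK hM hC (hmemC s (by omega)) (hmemC (s+1) hA)
        (g := G s) ?_ ?_
      · rw [hGs, ← hvdef s (by omega), ← hvdef (s+1) hA]
        have c := modcase (v (s+1) + 2*n - v s - 1) (2*n) hm0 (by omega)
        omega
      · intro k hk hdd
        obtain ⟨hdd1, hdd2⟩ := hdd
        obtain ⟨u, hu, hvu⟩ := hsurj k hk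
        unfold ddm at hdd1 hdd2
        rw [← hvdef s (by omega)] at hdd1 hdd2
        have hk2 := k.2
        have c1 := modcase (k.1 + 2*n - v s) (2*n) hm0 (by omega)
        rw [hGs] at hdd2
        -- v s < k.1 = v u < v (s+1) : contradiction with order
        have h1 : v s < v u := by omega
        have h2 : v u < v (s+1) := by omega
        have h3 : s < u := by
          by_contra h
          have := hwmono u s (by omega) (by omega)
          omega
        have h4 : u < s + 1 := by
          by_contra h
          have := hwmono (s+1) u (by omega) hu
          omega
        omega
    · -- wrap-around pair
      have hs1 : s = r - 1 := by omega
      have hGs : G s = v 0 + 2*n - v s := by simp only [hG]; rw [if_neg (by omega)]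
      have hv1 := hvlt s hs
      have hv0 := hvlt 0 hrpos
      have hle : v 0 ≤ v s := hwmono 0 s (by omega) hs
      refine window_odd hn hK hM hC (hmemC s hs) (hmemC 0 hrpos)
        (g := G s) ?_ ?_
      · rw [hGs, ← hvdef s hs, ← hvdef 0 hrpos]
        rcases Nat.lt_or_ge (v 0) (v s) with hl | hg0
        · rw [Nat.mod_eq_of_lt (by omega)]
          omega
        · -- v 0 = v s, r = 1, s = 0
          have hvs : v 0 = v s := by omega
          have hred : v 0 + 2*n - v s - 1 = 2*n - 1 := by omega
          rw [hred, Nat.mod_eq_of_lt (by omega)]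
          omega
      · intro k hk hdd
        obtain ⟨hdd1, hdd2⟩ := hdd
        obtain ⟨u, hu, hvu⟩ := hsurj k hk
        unfold ddm at hdd1 hdd2
        rw [← hvdef s hs] at hdd1 hdd2
        have hk2 := k.2
        have c1 := modcase (k.1 + 2*n - v s) (2*n) hm0 (by omega)
        rw [hGs] at hdd2
        have hus : v u ≤ v s := hwmono u s (by omega) hs
        have hu0 : v 0 ≤ v u := hwmono 0 u (by omega) hu
        omega
  -- telescoping sum
  have htel : ∀ t, t ≤ r - 1 → (∑ s ∈ Finset.range t, G s) = v t - v 0 := by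
    intro t
    induction t with
    | zero => simp
    | succ t ih =>
      intro ht
      rw [Finset.sum_range_succ, ih (by omega)]
      have h1 : t + 1 < r := by omega
      have hGt : G t = v (t+1) - v t := by simp only [hG]; rw [if_pos h1]
      have h2 : v t < v (t+1) := hmono t (t+1) (by omega) h1
      have h3 : v 0 ≤ v t := hwmono 0 t (by omega) (by omega)
      omega
  have hsum : (∑ s ∈ Finset.range r, G s) = 2*n := by
    obtain ⟨r', hr'⟩ : ∃ r', r = r' + 1 := ⟨r - 1, by omega⟩
    have htel' := htel r' (by omega)
    have hGlast : G r' = v 0 + 2*n - v r' := by simp only [hG]; rw [if_neg (by omega)]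
    have h2 := hwmono 0 r' (by omega) (by omega)
    have h3 := hvlt r' (by omega)
    have h4 := hvlt 0 hrpos
    rw [hr', Finset.sum_range_succ, htel']
    omega
  have hodd : ∀ s ∈ Finset.range r, G s % 2 = 1 % 2 :=
    fun s hs => by rw [Nat.one_mod_eq_one.2 (by omega), ← Nat.odd_iff]; exact ga s (Finset.mem_range.1 hs)
  have hpar : (∑ s ∈ Finset.range r, G s) % 2 = (∑ s ∈ Finset.range r, 1) % 2 := by
    rw [Finset.sum_nat_mod, Finset.sum_congr rfl hodd, ← Finset.sum_nat_mod]
  rw [hsum, Finset.sum_const, smul_eq_mul, mul_one, Finset.card_range] at hpar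
  rw [Nat.even_iff]
  omega

lemma converse_mono (hn : 0 < n) (hK : IsKrewerasComplement (2*n) P Q)
    (hQ2 : ∀ B ∈ Q.parts, Even B.card) : Mono P := by
  classical
  have hm0 : 0 < 2*n := by omega
  intro B hB
  by_contra hB2
  push_neg at hB2
  obtain ⟨hne, hno⟩ := hB2
  obtain ⟨a, ha, hae⟩ := hne
  obtain ⟨b, hb, hbo⟩ := hno
  rw [Nat.not_even_iff] at hae
  rw [Nat.not_odd_iff] at hbo
  obtain ⟨x, y, hx, hy, hxy, hpar⟩ :
      ∃ x y : Fin (2*n), x ∈ B ∧ y ∈ B ∧ x.1 < y.1 ∧ (y.1 - x.1) % 2 = 1 := by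
    rcases Nat.lt_or_ge a.1 b.1 with h | h
    · exact ⟨a, b, ha, hb, h, by omega⟩
    · have hne' : a.1 ≠ b.1 := by omega
      exact ⟨b, a, hb, ha, by omega, by omega⟩
  set T : Finset (Fin (2*n)) := Finset.Ico x y with hT
  have hTmem : ∀ k : Fin (2*n), k ∈ T ↔ x.1 ≤ k.1 ∧ k.1 < y.1 := by
    intro k
    rw [hT, Finset.mem_Ico]
    constructor
    · rintro ⟨h1, h2⟩; exact ⟨h1, h2⟩
    · rintro ⟨h1, h2⟩; exact ⟨h1, h2⟩
  have hTcard : T.card = y.1 - x.1 := by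
    rw [hT, Fin.card_Ico]
  have hsplit : ∀ C ∈ Q.parts, C ⊆ T ∨ (∀ c ∈ C, c ∉ T) := by
    intro C hC
    by_contra hcc
    push_neg at hcc
    obtain ⟨hns, c, hc, hcT⟩ := hcc
    obtain ⟨d, hd, hdT⟩ := Finset.not_subset.1 hns
    rw [hTmem] at hcT hdT
    push_neg at hdT
    have hd2 := d.2
    have hc2 := c.2
    refine sepPQ_false hn hK.1 hB hC hx hy hc hd ?_ ?_
    · unfold ddm
      have c1 := modcase (c.1 + 2*n - x.1) (2*n) hm0 (by omega)
      have c2 := modcase (y.1 + 2*n - x.1) (2*n) hm0 (by omega)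
      omega
    · unfold ddm
      have c1 := modcase (d.1 + 2*n - x.1) (2*n) hm0 (by omega)
      have c2 := modcase (y.1 + 2*n - x.1) (2*n) hm0 (by omega)
      omega
  set S := Q.parts.filter (fun C => C ⊆ T) with hS
  have hTbi : T = S.biUnion id := by
    apply Finset.ext
    intro t
    constructor
    · intro ht
      obtain ⟨C, hC, htC⟩ := Q.exists_mem (mem_univ t)
      have hCS : C ∈ S := by
        rw [hS, Finset.mem_filter]
        refine ⟨hC, ?_⟩
        rcases hsplit C hC with h | h
        · exact h
        · exact absurd ht (h t htC)
      exact Finset.mem_biUnion.2 ⟨C, hCS, htC⟩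
    · intro ht
      obtain ⟨C, hCS, htC⟩ := Finset.mem_biUnion.1 ht
      exact (Finset.mem_filter.1 hCS).2 htC
  have hdisj : ∀ C1 ∈ S, ∀ C2 ∈ S, C1 ≠ C2 → Disjoint (id C1) (id C2) := by
    intro C1 h1 C2 h2 h12
    exact Q.disjoint (Finset.mem_coe.2 (Finset.mem_filter.1 h1).1)
      (Finset.mem_coe.2 (Finset.mem_filter.1 h2).1) h12
  have hcard : T.card = ∑ C ∈ S, C.card := by
    rw [hTbi, Finset.card_biUnion hdisj]
    rfl
  have heven : (∑ C ∈ S, C.card) % 2 = 0 := by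
    rw [Finset.sum_nat_mod]
    have : ∀ C ∈ S, C.card % 2 = 0 :=
      fun C hCS => Nat.even_iff.1 (hQ2 C (Finset.mem_filter.1 hCS).1)
    rw [Finset.sum_congr rfl this]
    simp
  omega

end Main

/-- A noncrossing partition `P` of `{1, …, 2n}` is monochromatic with respect to the
alternating 2-coloring iff its Kreweras complement is 2-divisible. -/
theorem stmt8 (n : ℕ) (hn : 0 < n)
    (P Q : Finpartition (univ : Finset (Fin (2 * n))))
    (hK : IsKrewerasComplement (2 * n) P Q) :
    Mono P ↔ ∀ B ∈ Q.parts, Even B.card := by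
  constructor
  · intro hM B hB
    exact forward_even hn hK hM hB
  · intro h
    exact converse_mono hn hK h
end

section
/- If two points x and x' on the boundary circle of a planar disk domain lie on the boundary of the same positive nodal domain of a continuous function f, and two points y and y' lie on the boundary of the same negative nodal domain, and the four points appear on the circle in the cyclic order x, y, x', y', then a contradiction arises: such a configuration is impossible. Equivalently, the partition of boundary points induced by membership in nodal-domain closures is noncrossing. -/
open Set

/-- The Euclidean norm on `ℝ²` (as `ℝ × ℝ`). -/
noncomputable def nrm (p : ℝ × ℝ) : ℝ := Real.sqrt (p.1 ^ 2 + p.2 ^ 2)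

def dotp (v w : ℝ × ℝ) : ℝ := v.1 * w.1 + v.2 * w.2
def crossp (v w : ℝ × ℝ) : ℝ := v.1 * w.2 - v.2 * w.1
noncomputable def ang (v w : ℝ × ℝ) : ℝ := Real.arcsin (crossp v w / (nrm v * nrm w))
/-- `θ` is an angle (argument) of the nonzero vector `v`. -/
def IsAng (θ : ℝ) (v : ℝ × ℝ) : Prop :=
  Real.cos θ = v.1 / nrm v ∧ Real.sin θ = v.2 / nrm v

lemma nrm_nonneg (v : ℝ × ℝ) : 0 ≤ nrm v := Real.sqrt_nonneg _

lemma nrm_sq (v : ℝ × ℝ) : nrm v ^ 2 = v.1 ^ 2 + v.2 ^ 2 :=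
  Real.sq_sqrt (by positivity)

lemma nrm_pos {v : ℝ × ℝ} (hv : v ≠ 0) : 0 < nrm v := by
  rcases (nrm_nonneg v).lt_or_eq with h | h
  · exact h
  · exfalso; apply hv
    have h2 : v.1 ^ 2 + v.2 ^ 2 = 0 := by
      have := nrm_sq v; rw [← h] at this; nlinarith
    have h1 : v.1 = 0 := by nlinarith [sq_nonneg v.1, sq_nonneg v.2]
    have h2' : v.2 = 0 := by nlinarith [sq_nonneg v.1, sq_nonneg v.2]
    exact Prod.ext h1 h2'

lemma nrm_cs (θ : ℝ) : nrm (Real.cos θ, Real.sin θ) = 1 := by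
  unfold nrm
  simp only
  rw [show Real.cos θ ^ 2 + Real.sin θ ^ 2 = 1 by
    have := Real.sin_sq_add_cos_sq θ; linarith]
  exact Real.sqrt_one

lemma isAng_cs (θ : ℝ) : IsAng θ (Real.cos θ, Real.sin θ) := by
  constructor <;> simp [nrm_cs θ]

lemma nrm_le_one_iff {v : ℝ × ℝ} : nrm v ≤ 1 ↔ v.1 ^ 2 + v.2 ^ 2 ≤ 1 := by
  rw [nrm, show (1:ℝ) = Real.sqrt 1 from Real.sqrt_one.symm,
    Real.sqrt_le_sqrt_iff (by positivity), Real.sqrt_one]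

lemma nrm_lt_one_iff {v : ℝ × ℝ} : nrm v < 1 ↔ v.1 ^ 2 + v.2 ^ 2 < 1 := by
  rw [nrm, show (1:ℝ) = Real.sqrt 1 from Real.sqrt_one.symm,
    Real.sqrt_lt_sqrt_iff (by positivity), Real.sqrt_one]

/-- key identity: dot² + cross² = |v|²|w|². -/
lemma lagrange (v w : ℝ × ℝ) :
    dotp v w ^ 2 + crossp v w ^ 2 = nrm v ^ 2 * nrm w ^ 2 := by
  rw [nrm_sq, nrm_sq]; unfold dotp crossp; ring

section StepLemma
variable {v w : ℝ × ℝ}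

lemma ratio_bounds (hv : v ≠ 0) (hw : w ≠ 0) (hd : 0 < dotp v w) :
    (crossp v w / (nrm v * nrm w)) ^ 2 < 1 := by
  have hv' := nrm_pos hv
  have hw' := nrm_pos hw
  have hL := lagrange v w
  rw [div_pow]
  rw [div_lt_one (by positivity)]
  have : dotp v w ^ 2 > 0 := by positivity
  nlinarith [mul_pow (nrm v) (nrm w) 2]

lemma abs_ang_lt (hv : v ≠ 0) (hw : w ≠ 0) (hd : 0 < dotp v w) :
    |ang v w| < Real.pi / 2 := by
  have h := ratio_bounds hv hw hd
  have h1 : crossp v w / (nrm v * nrm w) < 1 := by nlinarith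
  have h2 : -1 < crossp v w / (nrm v * nrm w) := by nlinarith
  rw [abs_lt]
  exact ⟨(Real.neg_pi_div_two_lt_arcsin).2 h2, Real.arcsin_lt_pi_div_two.2 h1⟩

lemma cos_ang (hv : v ≠ 0) (hw : w ≠ 0) (hd : 0 < dotp v w) :
    Real.cos (ang v w) = dotp v w / (nrm v * nrm w) := by
  have hv' := nrm_pos hv
  have hw' := nrm_pos hw
  have hL := lagrange v w
  rw [ang, Real.cos_arcsin]
  have key : 1 - (crossp v w / (nrm v * nrm w)) ^ 2 = (dotp v w / (nrm v * nrm w)) ^ 2 := by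
    field_simp
    nlinarith [mul_pow (nrm v) (nrm w) 2]
  rw [key, Real.sqrt_sq (by positivity)]

lemma sin_ang (hv : v ≠ 0) (hw : w ≠ 0) (hd : 0 < dotp v w) :
    Real.sin (ang v w) = crossp v w / (nrm v * nrm w) := by
  have h := ratio_bounds hv hw hd
  exact Real.sin_arcsin (by nlinarith) (by nlinarith)

/-- The step lemma: adding the relative angle moves an argument of `v` to one of `w`. -/
lemma isAng_step (hv : v ≠ 0) (hw : w ≠ 0) (hd : 0 < dotp v w) {θ : ℝ}
    (hθ : IsAng θ v) : IsAng (θ + ang v w) w := by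
  obtain ⟨hc, hs⟩ := hθ
  have hv' := nrm_pos hv
  have hw' := nrm_pos hw
  have hca := cos_ang hv hw hd
  have hsa := sin_ang hv hw hd
  have hnv := nrm_sq v
  constructor
  all_goals have hvv : nrm v * nrm v = v.1 ^ 2 + v.2 ^ 2 := by nlinarith [nrm_sq v]
  · rw [Real.cos_add, hc, hs, hca, hsa]
    field_simp
    unfold dotp crossp
    linear_combination (-(1:ℝ) * w.1) * hnv
  · rw [Real.sin_add, hc, hs, hca, hsa]
    field_simp
    unfold dotp crossp
    linear_combination (-(1:ℝ) * w.2) * hnv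

/-- Two arguments of the same vector differ by a multiple of `2π`. -/
lemma isAng_sub {θ θ' : ℝ} (h : IsAng θ v) (h' : IsAng θ' v) :
    ∃ k : ℤ, θ' = θ + 2 * Real.pi * k := by
  have hcos : Real.cos (θ' - θ) = 1 := by
    rw [Real.cos_sub, h.1, h.2, h'.1, h'.2]
    rcases eq_or_ne v 0 with rfl | hv
    · exfalso
      have h1 := h.1
      have h2 := h.2
      have hz : nrm (0 : ℝ × ℝ) = 0 := by simp [nrm]
      rw [hz] at h1 h2
      simp at h1 h2
      have := Real.sin_sq_add_cos_sq θ
      rw [h1, h2] at this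
      norm_num at this
    · have hv' := nrm_pos hv
      have := nrm_sq v
      field_simp
      nlinarith
  obtain ⟨n, hn⟩ := (Real.cos_eq_one_iff _).1 hcos
  exact ⟨n, by push_cast at hn ⊢ <;> linarith⟩

end StepLemma

section Geom

/-- If `u` is a unit vector, `v` in the closed unit disk, `v ≠ u`, then `u − v` is in the
open half plane of `u`. -/
lemma dotp_sub_pos {u v : ℝ × ℝ} (hu : nrm u = 1) (hv : nrm v ≤ 1) (hne : v ≠ u) :
    0 < dotp u (u - v) := by
  have hu2 : u.1 ^ 2 + u.2 ^ 2 = 1 := by rw [← nrm_sq, hu]; norm_num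
  have hv2 : v.1 ^ 2 + v.2 ^ 2 ≤ 1 := nrm_le_one_iff.1 hv
  by_contra h
  push_neg at h
  apply hne
  have hd : 1 ≤ dotp u v := by
    have : dotp u (u - v) = (u.1^2 + u.2^2) - dotp u v := by
      unfold dotp; simp [Prod.fst_sub, Prod.snd_sub]; ring
    rw [this, hu2] at h; linarith
  have h1 : (v.1 - u.1) ^ 2 + (v.2 - u.2) ^ 2 ≤ 0 := by
    unfold dotp at hd; nlinarith
  have e1 : v.1 = u.1 := by nlinarith [sq_nonneg (v.1 - u.1), sq_nonneg (v.2 - u.2)]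
  have e2 : v.2 = u.2 := by nlinarith [sq_nonneg (v.1 - u.1), sq_nonneg (v.2 - u.2)]
  exact Prod.ext e1 e2

/-- Two small vectors (relative to their norms) have positive dot product. -/
lemma dotp_pos_of_close {v w : ℝ × ℝ} (hw : w ≠ 0)
    (h : nrm (v - w) < nrm w) : 0 < dotp v w := by
  have h1 : nrm (v - w) ^ 2 < nrm w ^ 2 := by
    have := nrm_nonneg (v - w); nlinarith
  rw [nrm_sq, nrm_sq] at h1
  have hw' := nrm_pos hw
  have hw2 := nrm_sq w
  unfold dotp
  simp only [Prod.fst_sub, Prod.snd_sub] at h1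
  nlinarith [sq_nonneg v.1, sq_nonneg v.2]

end Geom

section IntConst

/-- A continuous function on a preconnected set whose values are all integer multiples of
`2π` is constant. -/
lemma const_of_int_valued {S : Set (ℝ × ℝ)} (hS : IsPreconnected S)
    {g : ℝ × ℝ → ℝ} (hg : ContinuousOn g S)
    (hint : ∀ z ∈ S, ∃ k : ℤ, g z = 2 * Real.pi * k)
    {z₁ z₂ : ℝ × ℝ} (h₁ : z₁ ∈ S) (h₂ : z₂ ∈ S) : g z₁ = g z₂ := by
  by_contra hne
  have hpi := Real.pi_pos
  obtain ⟨k₁, hk₁⟩ := hint z₁ h₁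
  obtain ⟨k₂, hk₂⟩ := hint z₂ h₂
  have hkne : k₁ ≠ k₂ := by
    rintro rfl; exact hne (hk₁.trans hk₂.symm)
  -- a value strictly between
  rcases hkne.lt_or_gt with hlt | hlt
  · have hmem : 2 * Real.pi * (k₁ + 1/2 : ℝ) ∈ Icc (g z₁) (g z₂) := by
      constructor
      · rw [hk₁]; nlinarith
      · rw [hk₂]
        have : (k₁ : ℝ) + 1 ≤ k₂ := by exact_mod_cast hlt
        nlinarith
    obtain ⟨z, hz, hgz⟩ := hS.intermediate_value h₁ h₂ hg hmem
    obtain ⟨k, hk⟩ := hint z hz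
    rw [hk] at hgz
    have : (k : ℝ) = k₁ + 1/2 := by
      have h2 : (2 * Real.pi) ≠ 0 := by positivity
      exact mul_left_cancel₀ h2 hgz
    have h1 : (2 : ℝ) * k = 2 * k₁ + 1 := by linarith
    have : (2 * k : ℤ) = 2 * k₁ + 1 := by exact_mod_cast h1
    omega
  · have hmem : 2 * Real.pi * (k₂ + 1/2 : ℝ) ∈ Icc (g z₂) (g z₁) := by
      constructor
      · rw [hk₂]; nlinarith
      · rw [hk₁]
        have : (k₂ : ℝ) + 1 ≤ k₁ := by exact_mod_cast hlt
        nlinarith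
    obtain ⟨z, hz, hgz⟩ := hS.intermediate_value h₂ h₁ hg hmem
    obtain ⟨k, hk⟩ := hint z hz
    rw [hk] at hgz
    have : (k : ℝ) = k₂ + 1/2 := by
      have h2 : (2 * Real.pi) ≠ 0 := by positivity
      exact mul_left_cancel₀ h2 hgz
    have h1 : (2 : ℝ) * k = 2 * k₂ + 1 := by linarith
    have : (2 * k : ℤ) = 2 * k₂ + 1 := by exact_mod_cast h1
    omega

end IntConst

section Cont

lemma continuous_nrm : Continuous nrm :=
  Continuous.sqrt ((continuous_fst.pow 2).add (continuous_snd.pow 2))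

lemma contOn_ang {S : Set (ℝ × ℝ)} {V W : ℝ × ℝ → ℝ × ℝ}
    (hV : Continuous V) (hW : Continuous W)
    (hV0 : ∀ z ∈ S, V z ≠ 0) (hW0 : ∀ z ∈ S, W z ≠ 0) :
    ContinuousOn (fun z => ang (V z) (W z)) S := by
  show ContinuousOn
    (fun z => Real.arcsin (crossp (V z) (W z) / (nrm (V z) * nrm (W z)))) S
  apply Real.continuous_arcsin.comp_continuousOn
  apply ContinuousOn.div
  · have : Continuous (fun z => crossp (V z) (W z)) := by
      show Continuous (fun z => (V z).1 * (W z).2 - (V z).2 * (W z).1)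
      exact ((continuous_fst.comp hV).mul (continuous_snd.comp hW)).sub
        ((continuous_snd.comp hV).mul (continuous_fst.comp hW))
    exact this.continuousOn
  · exact ((continuous_nrm.comp hV).mul (continuous_nrm.comp hW)).continuousOn
  · exact fun z hz =>
      mul_ne_zero (ne_of_gt (nrm_pos (hV0 z hz))) (ne_of_gt (nrm_pos (hW0 z hz)))

lemma min_diff {p r s : ℝ} (h : r ≤ p) :
    0 ≤ min p s - min r s ∧ min p s - min r s ≤ p - r := by
  rcases le_total s r with h1 | h1
  · rw [min_eq_right (h1.trans h), min_eq_right h1]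
    constructor <;> linarith
  · rw [min_eq_left h1]
    constructor
    · have hrm : r ≤ min p s := le_min h (by linarith)
      linarith
    · have hm : min p s ≤ p := min_le_left _ _
      linarith

lemma nrm_sq_le_two_dist (p q : ℝ × ℝ) : nrm (p - q) ^ 2 ≤ 2 * dist p q ^ 2 := by
  rw [nrm_sq]
  have h1 : |p.1 - q.1| ≤ dist p q := by
    rw [Prod.dist_eq, Real.dist_eq]; exact le_max_left _ _
  have h2 : |p.2 - q.2| ≤ dist p q := by
    rw [Prod.dist_eq, Real.dist_eq]; exact le_max_right _ _
  have e1 : (p - q).1 = p.1 - q.1 := rfl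
  have e2 : (p - q).2 = p.2 - q.2 := rfl
  rw [e1, e2]
  have d0 : (0:ℝ) ≤ dist p q := dist_nonneg
  nlinarith [abs_nonneg (p.1 - q.1), abs_nonneg (p.2 - q.2), sq_abs (p.1 - q.1), sq_abs (p.2 - q.2)]

end Cont

lemma int_pin_one {K : ℤ} {e : ℝ} (he0 : 0 < e) (he2 : e < 2 * Real.pi)
    (h1 : e < 2 * Real.pi * (K:ℝ)) (h2 : 2 * Real.pi * (K:ℝ) < e + 2 * Real.pi) : K = 1 := by
  have hpi := Real.pi_pos
  have hK0 : (0:ℝ) < (K:ℝ) := by nlinarith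
  have hK2 : ((K:ℝ)) < 2 := by nlinarith
  have h3 : (0:ℤ) < K := by exact_mod_cast hK0
  have h4 : K < 2 := by exact_mod_cast hK2
  omega

lemma int_pin_zero {K : ℤ} {e : ℝ} (he0 : -(2 * Real.pi) < e) (he2 : e < 0)
    (h1 : e < 2 * Real.pi * (K:ℝ)) (h2 : 2 * Real.pi * (K:ℝ) < e + 2 * Real.pi) : K = 0 := by
  have hpi := Real.pi_pos
  have hK0 : (-1:ℝ) < (K:ℝ) := by nlinarith
  have hK2 : ((K:ℝ)) < 1 := by nlinarith
  have h3 : (-1:ℤ) < K := by exact_mod_cast hK0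
  have h4 : K < 1 := by exact_mod_cast hK2
  omega

section Crossing

open Real in
/-- The key topological crossing lemma: two disjoint curves inside the closed unit disk,
whose endpoints sit on the circle at interleaved angles `a < b < c < d < a + 2π`,
cannot exist. Proved via an explicit continuous angle lift of
`F (s,t) = Γ s - Δ t` over the square, combined with half-plane constraints on the sides. -/
theorem crossing (a b c d : ℝ) (hab : a < b) (hbc : b < c) (hcd : c < d)
    (hda : d < a + 2 * π)
    (Γ Δ : ℝ → ℝ × ℝ) (hΓ : Continuous Γ) (hΔ : Continuous Δ)
    (hΓd : ∀ s ∈ Icc (0:ℝ) 1, nrm (Γ s) ≤ 1) (hΔd : ∀ t ∈ Icc (0:ℝ) 1, nrm (Δ t) ≤ 1)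
    (hdisj : ∀ s ∈ Icc (0:ℝ) 1, ∀ t ∈ Icc (0:ℝ) 1, Γ s ≠ Δ t)
    (hΓ0 : Γ 0 = (cos a, sin a)) (hΓ1 : Γ 1 = (cos c, sin c))
    (hΔ0 : Δ 0 = (cos b, sin b)) (hΔ1 : Δ 1 = (cos d, sin d)) : False := by
  have hpi := Real.pi_pos
  set sq : Set (ℝ × ℝ) := Icc (0:ℝ) 1 ×ˢ Icc (0:ℝ) 1 with hsq
  have hsqc : IsCompact sq := isCompact_Icc.prod isCompact_Icc
  set F : ℝ × ℝ → ℝ × ℝ := fun z => Γ z.1 - Δ z.2 with hF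
  have hFc : Continuous F := (hΓ.comp continuous_fst).sub (hΔ.comp continuous_snd)
  have hF0 : ∀ z ∈ sq, F z ≠ 0 := by
    rintro ⟨s, t⟩ ⟨hs, ht⟩
    exact sub_ne_zero_of_ne (hdisj s hs t ht)
  -- positive minimum of |F| on the square
  obtain ⟨z₀, hz₀, hminon⟩ := hsqc.exists_isMinOn
    ⟨(0,0), by constructor <;> constructor <;> norm_num⟩
    ((continuous_nrm.comp hFc).continuousOn)
  rw [isMinOn_iff] at hminon
  set m : ℝ := nrm (F z₀) with hm
  have hm0 : 0 < m := nrm_pos (hF0 _ hz₀)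
  -- uniform continuity
  have hUC := hsqc.uniformContinuousOn_of_continuous hFc.continuousOn
  rw [Metric.uniformContinuousOn_iff] at hUC
  obtain ⟨δ, hδ0, hUC⟩ := hUC (m/2) (by positivity)
  have hdot : ∀ z ∈ sq, ∀ z' ∈ sq, dist z z' < δ → 0 < dotp (F z) (F z') := by
    intro z hz z' hz' hd
    apply dotp_pos_of_close (hF0 z' hz')
    have h1 : dist (F z) (F z') < m / 2 := hUC z hz z' hz' hd
    have h2 := nrm_sq_le_two_dist (F z) (F z')
    have h3 : m ≤ nrm (F z') := hminon z' hz'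
    have h4 : (0:ℝ) ≤ dist (F z) (F z') := dist_nonneg
    have h5 : F z - F z' = F z - F z' := rfl
    nlinarith [nrm_nonneg (F z - F z'), nrm_nonneg (F z')]
  -- the grid size
  obtain ⟨n, hn⟩ := exists_nat_one_div_lt hδ0
  set N : ℕ := n + 1 with hN
  have hN0 : (0:ℝ) < (N:ℝ) := by positivity
  have hNδ : 1 / (N:ℝ) < δ := by
    rw [hN]; push_cast; exact hn
  set q : ℕ → ℝ → ℝ := fun k s => min ((k:ℝ)/(N:ℝ)) s with hq
  have hq01 : ∀ (k : ℕ), ∀ s ∈ Icc (0:ℝ) 1, q k s ∈ Icc (0:ℝ) 1 := by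
    intro k s hs
    constructor
    · exact le_min (by positivity) hs.1
    · exact (min_le_right _ _).trans hs.2
  have hq0 : ∀ s ∈ Icc (0:ℝ) 1, q 0 s = 0 := by
    intro s hs
    simp only [hq, Nat.cast_zero, zero_div]
    exact min_eq_left hs.1
  have hqN : ∀ s ∈ Icc (0:ℝ) 1, q N s = s := by
    intro s hs
    simp only [hq]
    rw [div_self (ne_of_gt hN0)]
    exact min_eq_right hs.2
  have hqmem : ∀ (k : ℕ), ∀ s ∈ Icc (0:ℝ) 1, ∀ t ∈ Icc (0:ℝ) 1, (q k s, t) ∈ sq :=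
    fun k s hs t ht => ⟨hq01 k s hs, ht⟩
  -- consecutive grid points are close
  have hstepd : ∀ (k : ℕ), ∀ s ∈ Icc (0:ℝ) 1, ∀ t ∈ Icc (0:ℝ) 1,
      0 < dotp (F (q k s, t)) (F (q (k+1) s, t)) := by
    intro k s hs t ht
    apply hdot _ (hqmem k s hs t ht) _ (hqmem (k+1) s hs t ht)
    have hk : (k:ℝ)/(N:ℝ) ≤ ((k+1:ℕ):ℝ)/(N:ℝ) :=
      (div_le_div_iff_of_pos_right hN0).mpr (by push_cast; linarith)
    obtain ⟨hd0, hd1⟩ := min_diff (s := s) hk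
    have hdd : ((k+1:ℕ):ℝ)/(N:ℝ) - (k:ℝ)/(N:ℝ) = 1/(N:ℝ) := by
      push_cast; field_simp; ring
    rw [Prod.dist_eq, Real.dist_eq, Real.dist_eq]
    simp only [sub_self, abs_zero]
    rw [max_eq_left (abs_nonneg _)]
    rw [abs_sub_comm, abs_of_nonneg hd0]
    calc q (k+1) s - q k s ≤ 1/(N:ℝ) := by rw [← hdd]; exact hd1
    _ < δ := hNδ
  -- the explicit lift
  set x : ℝ × ℝ := (cos a, sin a) with hx
  set Θ : ℝ × ℝ → ℝ := fun z =>
      a + ang x (F (0, z.2)) +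
        ∑ k ∈ Finset.range N, ang (F (q k z.1, z.2)) (F (q (k+1) z.1, z.2)) with hΘ
  have hx0 : x ≠ 0 := by
    intro h
    have := nrm_cs a
    rw [← hx, h] at this
    simp [nrm] at this
  have hbase : ∀ t ∈ Icc (0:ℝ) 1, F (0, t) = x - Δ t := by
    intro t ht
    show Γ 0 - Δ t = x - Δ t
    rw [hΓ0]
  have hdotx : ∀ t ∈ Icc (0:ℝ) 1, 0 < dotp x (F (0, t)) := by
    intro t ht
    rw [hbase t ht]
    apply dotp_sub_pos (nrm_cs a) (hΔd t ht)
    intro h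
    exact hdisj 0 (by norm_num) t ht (by rw [hΓ0]; exact h.symm)
  have hmem0 : ∀ t ∈ Icc (0:ℝ) 1, ((0:ℝ), t) ∈ sq := by
    intro t ht; exact ⟨by norm_num, ht⟩
  -- the partial lift property
  have lift : ∀ j : ℕ, j ≤ N → ∀ s ∈ Icc (0:ℝ) 1, ∀ t ∈ Icc (0:ℝ) 1,
      IsAng (a + ang x (F (0, t)) +
        ∑ k ∈ Finset.range j, ang (F (q k s, t)) (F (q (k+1) s, t))) (F (q j s, t)) := by
    intro j
    induction j with
    | zero =>
      intro _ s hs t ht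
      rw [Finset.range_zero, Finset.sum_empty, add_zero, hq0 s hs]
      exact isAng_step hx0 (hF0 _ (hmem0 t ht)) (hdotx t ht) (hx ▸ isAng_cs a)
    | succ j ih =>
      intro hj s hs t ht
      have H := ih (by omega) s hs t ht
      rw [Finset.sum_range_succ, ← add_assoc]
      exact isAng_step (hF0 _ (hqmem j s hs t ht)) (hF0 _ (hqmem (j+1) s hs t ht))
        (hstepd j s hs t ht) H
  have hlift : ∀ z ∈ sq, IsAng (Θ z) (F z) := by
    rintro ⟨s, t⟩ ⟨hs, ht⟩
    have H := lift N le_rfl s hs t ht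
    rw [hqN s hs] at H
    exact H
  -- continuity of the lift
  have hΘc : ContinuousOn Θ sq := by
    rw [hΘ]
    apply ContinuousOn.add
    · apply ContinuousOn.add continuousOn_const
      apply contOn_ang continuous_const (hFc.comp (continuous_const.prodMk continuous_snd))
      · exact fun z hz => hx0
      · exact fun z hz => hF0 _ (hmem0 z.2 hz.2)
    · apply continuousOn_finset_sum
      intro k _
      apply contOn_ang
        (hFc.comp ((continuous_const.min continuous_fst).prodMk continuous_snd))
        (hFc.comp ((continuous_const.min continuous_fst).prodMk continuous_snd))
      · exact fun z hz => hF0 _ (hqmem k z.1 hz.1 z.2 hz.2)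
      · exact fun z hz => hF0 _ (hqmem (k+1) z.1 hz.1 z.2 hz.2)
  -- the side lemma
  have side : ∀ (α : ℝ) (S : Set (ℝ × ℝ)), S ⊆ sq → IsPreconnected S →
      (∀ z ∈ S, 0 < dotp (cos α, sin α) (F z)) →
      ∀ z₁ ∈ S, ∀ z₂ ∈ S, ∃ k : ℤ,
        |Θ z₁ - (α + 2 * π * k)| < π/2 ∧ |Θ z₂ - (α + 2 * π * k)| < π/2 := by
    intro α S hsub hSpre hdots z₁ hz₁ z₂ hz₂
    set u : ℝ × ℝ := (cos α, sin α) with hu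
    have hu0 : u ≠ 0 := by
      intro h
      have := nrm_cs α
      rw [← hu, h] at this
      simp [nrm] at this
    set ψ : ℝ × ℝ → ℝ := fun z => α + ang u (F z) with hψ
    have hψang : ∀ z ∈ S, IsAng (ψ z) (F z) := fun z hz =>
      isAng_step hu0 (hF0 z (hsub hz)) (hdots z hz) (hu ▸ isAng_cs α)
    have hψc : ContinuousOn ψ S :=
      continuousOn_const.add (contOn_ang continuous_const hFc
        (fun _ _ => hu0) (fun z hz => hF0 z (hsub hz)))
    have hint : ∀ z ∈ S, ∃ k : ℤ, Θ z - ψ z = 2 * π * k := by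
      intro z hz
      obtain ⟨k, hk⟩ := isAng_sub (hψang z hz) (hlift z (hsub hz))
      exact ⟨k, by linarith⟩
    have hconst : Θ z₁ - ψ z₁ = Θ z₂ - ψ z₂ :=
      const_of_int_valued hSpre ((hΘc.mono hsub).sub hψc) hint hz₁ hz₂
    obtain ⟨k, hk⟩ := hint z₁ hz₁
    refine ⟨k, ?_, ?_⟩
    · have : Θ z₁ - (α + 2 * π * k) = ang u (F z₁) := by
        rw [hψ] at hk; simp only at hk; linarith
      rw [this]
      exact abs_ang_lt hu0 (hF0 z₁ (hsub hz₁)) (hdots z₁ hz₁)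
    · have : Θ z₂ - (α + 2 * π * k) = ang u (F z₂) := by
        rw [hconst] at hk
        rw [hψ] at hk; simp only at hk; linarith
      rw [this]
      exact abs_ang_lt hu0 (hF0 z₂ (hsub hz₂)) (hdots z₂ hz₂)
  -- the four sides
  set SL : Set (ℝ × ℝ) := {(0:ℝ)} ×ˢ Icc (0:ℝ) 1 with hSL
  set SR : Set (ℝ × ℝ) := {(1:ℝ)} ×ˢ Icc (0:ℝ) 1 with hSR
  set SB : Set (ℝ × ℝ) := Icc (0:ℝ) 1 ×ˢ {(0:ℝ)} with hSB
  set ST : Set (ℝ × ℝ) := Icc (0:ℝ) 1 ×ˢ {(1:ℝ)} with hST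
  have hsubL : SL ⊆ sq := prod_mono (by norm_num [singleton_subset_iff]) le_rfl
  have hsubR : SR ⊆ sq := prod_mono (by norm_num [singleton_subset_iff]) le_rfl
  have hsubB : SB ⊆ sq := prod_mono le_rfl (by norm_num [singleton_subset_iff])
  have hsubT : ST ⊆ sq := prod_mono le_rfl (by norm_num [singleton_subset_iff])
  have hpreL : IsPreconnected SL := isPreconnected_singleton.prod isPreconnected_Icc
  have hpreR : IsPreconnected SR := isPreconnected_singleton.prod isPreconnected_Icc
  have hpreB : IsPreconnected SB := isPreconnected_Icc.prod isPreconnected_singleton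
  have hpreT : IsPreconnected ST := isPreconnected_Icc.prod isPreconnected_singleton
  have hdotL : ∀ z ∈ SL, 0 < dotp (cos a, sin a) (F z) := by
    rintro ⟨z1, z2⟩ ⟨hz1, hz2⟩
    have h1 : z1 = 0 := hz1
    subst h1
    exact hdotx z2 hz2
  have hdotR : ∀ z ∈ SR, 0 < dotp (cos c, sin c) (F z) := by
    rintro ⟨z1, z2⟩ ⟨hz1, hz2⟩
    have h1 : z1 = 1 := hz1
    subst h1
    have hFz : F (1, z2) = (cos c, sin c) - Δ z2 := by
      show Γ 1 - Δ z2 = _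
      rw [hΓ1]
    rw [hFz]
    apply dotp_sub_pos (nrm_cs c) (hΔd z2 hz2)
    intro h
    exact hdisj 1 (by norm_num) z2 hz2 (by rw [hΓ1, h])
  have hdotB : ∀ z ∈ SB, 0 < dotp (cos (b + π), sin (b + π)) (F z) := by
    rintro ⟨z1, z2⟩ ⟨hz1, hz2⟩
    have h2 : z2 = 0 := hz2
    subst h2
    have hFz : F (z1, 0) = Γ z1 - (cos b, sin b) := by
      show Γ z1 - Δ 0 = _
      rw [hΔ0]
    have key : dotp (cos (b + π), sin (b + π)) (F (z1, 0))
        = dotp (cos b, sin b) ((cos b, sin b) - Γ z1) := by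
      rw [hFz, Real.cos_add_pi, Real.sin_add_pi]
      show -cos b * (Γ z1 - (cos b, sin b)).1 + -sin b * (Γ z1 - (cos b, sin b)).2 = _
      show _ = cos b * ((cos b, sin b) - Γ z1).1 + sin b * ((cos b, sin b) - Γ z1).2
      simp only [Prod.fst_sub, Prod.snd_sub]
      ring
    rw [key]
    apply dotp_sub_pos (nrm_cs b) (hΓd z1 hz1)
    intro h
    exact hdisj z1 hz1 0 (by norm_num) (by rw [hΔ0, h])
  have hdotT : ∀ z ∈ ST, 0 < dotp (cos (d + π), sin (d + π)) (F z) := by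
    rintro ⟨z1, z2⟩ ⟨hz1, hz2⟩
    have h2 : z2 = 1 := hz2
    subst h2
    have hFz : F (z1, 1) = Γ z1 - (cos d, sin d) := by
      show Γ z1 - Δ 1 = _
      rw [hΔ1]
    have key : dotp (cos (d + π), sin (d + π)) (F (z1, 1))
        = dotp (cos d, sin d) ((cos d, sin d) - Γ z1) := by
      rw [hFz, Real.cos_add_pi, Real.sin_add_pi]
      show -cos d * (Γ z1 - (cos d, sin d)).1 + -sin d * (Γ z1 - (cos d, sin d)).2 = _
      show _ = cos d * ((cos d, sin d) - Γ z1).1 + sin d * ((cos d, sin d) - Γ z1).2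
      simp only [Prod.fst_sub, Prod.snd_sub]
      ring
    rw [key]
    apply dotp_sub_pos (nrm_cs d) (hΓd z1 hz1)
    intro h
    exact hdisj z1 hz1 1 (by norm_num) (by rw [hΔ1, h])
  -- corners
  have m00L : ((0:ℝ), (0:ℝ)) ∈ SL := ⟨rfl, by norm_num⟩
  have m01L : ((0:ℝ), (1:ℝ)) ∈ SL := ⟨rfl, by norm_num⟩
  have m10R : ((1:ℝ), (0:ℝ)) ∈ SR := ⟨rfl, by norm_num⟩
  have m11R : ((1:ℝ), (1:ℝ)) ∈ SR := ⟨rfl, by norm_num⟩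
  have m00B : ((0:ℝ), (0:ℝ)) ∈ SB := ⟨by norm_num, rfl⟩
  have m10B : ((1:ℝ), (0:ℝ)) ∈ SB := ⟨by norm_num, rfl⟩
  have m11T : ((1:ℝ), (1:ℝ)) ∈ ST := ⟨by norm_num, rfl⟩
  have m01T : ((0:ℝ), (1:ℝ)) ∈ ST := ⟨by norm_num, rfl⟩
  obtain ⟨kL, hA1, hA4⟩ := side a SL hsubL hpreL hdotL _ m00L _ m01L
  obtain ⟨kB, hB1, hB2⟩ := side (b + π) SB hsubB hpreB hdotB _ m00B _ m10B
  obtain ⟨kR, hC2, hC3⟩ := side c SR hsubR hpreR hdotR _ m10R _ m11R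
  obtain ⟨kT, hD3, hD4⟩ := side (d + π) ST hsubT hpreT hdotT _ m11T _ m01T
  rw [abs_lt] at hA1 hA4 hB1 hB2 hC2 hC3 hD3 hD4
  -- pin the four integer differences
  have hKLB : kL - kB = 1 := by
    apply int_pin_one (e := b - a) (by linarith) (by linarith) <;> push_cast <;> linarith
  have hKRB : kR - kB = 0 := by
    apply int_pin_zero (e := b - c) (by linarith) (by linarith) <;> push_cast <;> linarith
  have hKRT : kR - kT = 1 := by
    apply int_pin_one (e := d - c) (by linarith) (by linarith) <;> push_cast <;> linarith
  have hKLT : kL - kT = 1 := by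
    apply int_pin_one (e := d - a) (by linarith) (by linarith) <;> push_cast <;> linarith
  omega

end Crossing

section Build

lemma seg_disk {x p : ℝ × ℝ} (hx : nrm x ≤ 1) (hp : nrm p ≤ 1) {u : ℝ}
    (h0 : 0 ≤ u) (h1 : u ≤ 1) : nrm ((1 - u) • x + u • p) ≤ 1 := by
  rw [nrm_le_one_iff] at *
  have hD2 : (x.1 * p.1 + x.2 * p.2) ^ 2 ≤ (x.1^2 + x.2^2) * (p.1^2 + p.2^2) := by
    nlinarith [sq_nonneg (x.1 * p.2 - x.2 * p.1)]
  have hD : x.1 * p.1 + x.2 * p.2 ≤ 1 := by nlinarith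
  have e1 : ((1 - u) • x + u • p).1 = (1 - u) * x.1 + u * p.1 := rfl
  have e2 : ((1 - u) • x + u • p).2 = (1 - u) * x.2 + u * p.2 := rfl
  rw [e1, e2]
  nlinarith [mul_nonneg (sq_nonneg (1 - u)) (sub_nonneg.2 hx),
    mul_nonneg (sq_nonneg u) (sub_nonneg.2 hp),
    mul_nonneg (mul_nonneg h0 (by linarith : (0:ℝ) ≤ 1 - u)) (sub_nonneg.2 hD)]

/-- From a point on the circle in the closure of an open connected positivity domain,
and another such point, build a curve of positive values joining them inside the disk. -/
lemma build_path (f : ℝ × ℝ → ℝ) (hf : ContinuousOn f {p | nrm p ≤ 1})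
    (D : Set (ℝ × ℝ)) (hDopen : IsOpen D) (hDconn : IsConnected D)
    (hDsub : D ⊆ {p | nrm p < 1}) (hDpos : ∀ p ∈ D, 0 < f p)
    (x x' : ℝ × ℝ) (hx : nrm x = 1) (hx' : nrm x' = 1)
    (hfx : 0 < f x) (hfx' : 0 < f x')
    (hclx : x ∈ closure D) (hclx' : x' ∈ closure D) :
    ∃ Γ : ℝ → ℝ × ℝ, Continuous Γ ∧ Γ 0 = x ∧ Γ 1 = x' ∧
      ∀ s ∈ Icc (0:ℝ) 1, nrm (Γ s) ≤ 1 ∧ 0 < f (Γ s) := by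
  set S : Set (ℝ × ℝ) := {p | nrm p ≤ 1 ∧ 0 < f p} with hS
  have hDS : D ⊆ S := fun p hp => ⟨(hDsub hp).le, hDpos p hp⟩
  -- a path from a boundary point into the domain, along a segment
  have seg : ∀ z : ℝ × ℝ, nrm z = 1 → 0 < f z → z ∈ closure D →
      ∃ p ∈ D, JoinedIn S z p := by
    intro z hz hfz hcl
    have hzmem : z ∈ {p | nrm p ≤ 1} := le_of_eq hz
    have hcont := hf z hzmem
    rw [Metric.continuousWithinAt_iff] at hcont
    obtain ⟨r, hr0, hr⟩ := hcont (f z) hfz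
    obtain ⟨p, hpD, hdist⟩ := Metric.mem_closure_iff.1 hcl r hr0
    refine ⟨p, hpD, ?_⟩
    have hmem : ∀ u : unitInterval, ((1 - (u:ℝ)) • z + (u:ℝ) • p) ∈ S := by
      intro u
      have h0 := u.2.1
      have h1 := u.2.2
      have hnw : nrm ((1 - (u:ℝ)) • z + (u:ℝ) • p) ≤ 1 :=
        seg_disk (le_of_eq hz) (hDsub hpD).le h0 h1
      refine ⟨hnw, ?_⟩
      have hsub : ((1 - (u:ℝ)) • z + (u:ℝ) • p) - z = (u:ℝ) • (p - z) := by
        rw [sub_smul, one_smul, smul_sub]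
        abel
      have hd : dist ((1 - (u:ℝ)) • z + (u:ℝ) • p) z < r := by
        rw [dist_eq_norm, hsub, norm_smul]
        calc ‖(u:ℝ)‖ * ‖p - z‖ ≤ 1 * ‖p - z‖ := by
              apply mul_le_mul_of_nonneg_right _ (norm_nonneg _)
              rw [Real.norm_eq_abs, abs_of_nonneg h0]; exact h1
        _ = dist p z := by rw [one_mul, dist_eq_norm]
        _ = dist z p := dist_comm _ _
        _ < r := hdist
      have := hr hnw hd
      rw [Real.dist_eq, abs_lt] at this
      linarith [this.1]
    exact ⟨{ toFun := fun u => (1 - (u:ℝ)) • z + (u:ℝ) • p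
             continuous_toFun := by
               apply Continuous.add
               · exact (continuous_const.sub continuous_subtype_val).smul continuous_const
               · exact continuous_subtype_val.smul continuous_const
             source' := by simp
             target' := by simp }, hmem⟩
  obtain ⟨p, hpD, hjoin⟩ := seg x hx hfx hclx
  obtain ⟨p', hpD', hjoin'⟩ := seg x' hx' hfx' hclx'
  have hDpath : IsPathConnected D := (hDopen.isConnected_iff_isPathConnected).1 hDconn
  have hmid : JoinedIn S p p' := (hDpath.joinedIn p hpD p' hpD').mono hDS
  have hfinal : JoinedIn S x x' := (hjoin.trans hmid).trans hjoin'.symm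
  obtain ⟨γ, hγ⟩ := hfinal
  refine ⟨γ.extend, γ.continuous_extend, γ.extend_zero, γ.extend_one, ?_⟩
  intro s hs
  rw [Path.extend_apply γ hs]
  exact hγ _

end Build


/-- Let `f` be continuous on the closed unit disk, and let `D`, `D'` be nodal domains
(connected components of the open disk minus the closure of the zero set of `f`) on which
`f` is positive, resp. negative.  If four boundary points at angles `a < b < c < d`
(within one period) satisfy `f > 0` at angles `a, c` and `f < 0` at angles `b, d`, then
the points at `a, c` cannot lie in the closure of `D` while those at `b, d` lie in the
closure of `D'`: such a crossing configuration is impossible. -/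
theorem stmt11 (f : ℝ × ℝ → ℝ) (hf : ContinuousOn f {p | nrm p ≤ 1})
    (U : Set (ℝ × ℝ))
    (hU : U = {p | nrm p < 1} \ closure {p | nrm p < 1 ∧ f p = 0})
    (D D' : Set (ℝ × ℝ))
    (hD : ∃ p ∈ U, D = connectedComponentIn U p)
    (hD' : ∃ p ∈ U, D' = connectedComponentIn U p)
    (hDpos : ∀ p ∈ D, 0 < f p) (hD'neg : ∀ p ∈ D', f p < 0)
    (a b c d : ℝ) (hab : a < b) (hbc : b < c) (hcd : c < d) (hda : d < a + 2 * Real.pi)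
    (hfa : 0 < f (Real.cos a, Real.sin a)) (hfc : 0 < f (Real.cos c, Real.sin c))
    (hfb : f (Real.cos b, Real.sin b) < 0) (hfd : f (Real.cos d, Real.sin d) < 0)
    (hclA : (Real.cos a, Real.sin a) ∈ closure D)
    (hclC : (Real.cos c, Real.sin c) ∈ closure D)
    (hclB : (Real.cos b, Real.sin b) ∈ closure D')
    (hclD : (Real.cos d, Real.sin d) ∈ closure D') :
    False := by
  -- U is open
  have hUopen : IsOpen U := by
    rw [hU]
    apply IsOpen.sdiff ?_ isClosed_closure
    have : {p : ℝ × ℝ | nrm p < 1} = nrm ⁻¹' Iio 1 := rfl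
    rw [this]
    exact isOpen_Iio.preimage continuous_nrm
  have hUsub : U ⊆ {p : ℝ × ℝ | nrm p < 1} := by rw [hU]; exact diff_subset
  -- properties of D and D'
  obtain ⟨p₀, hp₀, hDeq⟩ := hD
  obtain ⟨p₀', hp₀', hDeq'⟩ := hD'
  have hDopen : IsOpen D := hDeq ▸ hUopen.connectedComponentIn
  have hD'open : IsOpen D' := hDeq' ▸ hUopen.connectedComponentIn
  have hDconn : IsConnected D := hDeq ▸ isConnected_connectedComponentIn_iff.2 hp₀
  have hD'conn : IsConnected D' := hDeq' ▸ isConnected_connectedComponentIn_iff.2 hp₀'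
  have hDsub : D ⊆ {p : ℝ × ℝ | nrm p < 1} :=
    hDeq ▸ (connectedComponentIn_subset U p₀).trans hUsub
  have hD'sub : D' ⊆ {p : ℝ × ℝ | nrm p < 1} :=
    hDeq' ▸ (connectedComponentIn_subset U p₀').trans hUsub
  -- the positive curve
  obtain ⟨Γ, hΓc, hΓ0, hΓ1, hΓprop⟩ := build_path f hf D hDopen hDconn hDsub hDpos
    (Real.cos a, Real.sin a) (Real.cos c, Real.sin c) (nrm_cs a) (nrm_cs c)
    hfa hfc hclA hclC
  -- the negative curve
  obtain ⟨Δ, hΔc, hΔ0, hΔ1, hΔprop⟩ := build_path (fun p => -f p) hf.neg D' hD'open hD'conn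
    hD'sub (fun p hp => by simpa using (hD'neg p hp))
    (Real.cos b, Real.sin b) (Real.cos d, Real.sin d) (nrm_cs b) (nrm_cs d)
    (by simpa using hfb) (by simpa using hfd) hclB hclD
  exact crossing a b c d hab hbc hcd hda Γ Δ hΓc hΔc
    (fun s hs => (hΓprop s hs).1) (fun t ht => (hΔprop t ht).1)
    (fun s hs t ht h => by
      have h1 := (hΓprop s hs).2
      have h2 := (hΔprop t ht).2
      rw [h] at h1
      linarith)
    hΓ0 hΓ1 hΔ0 hΔ1
end

section
/- For the annulus B(0,1) \ closure(B(0,ε)) and each positive integer n, there exist real constants A_n, B_n, not both zero, such that u(r,θ) = (A_n r^n + B_n r^{−n}) cos(nθ) is harmonic on the annulus and satisfies the Steklov boundary condition with a common eigenvalue λ on both boundary circles; moreover any such eigenfunction changes sign exactly 4n times on the full boundary (2n times on each circle). -/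
open Set

/-- `u` is harmonic on `s ⊆ ℝ²`: the sum of the two second partial derivatives
vanishes at every point of `s`. -/
def Harm2 (u : ℝ × ℝ → ℝ) (s : Set (ℝ × ℝ)) : Prop :=
  ∀ p ∈ s, iteratedDeriv 2 (fun x => u (x, p.2)) p.1
    + iteratedDeriv 2 (fun y => u (p.1, y)) p.2 = 0

/-- `g` alternates strictly in sign at `N` increasing points of `[0, 2π)`. -/
def AltOn (g : ℝ → ℝ) (N : ℕ) : Prop :=
  ∃ t : ℕ → ℝ, (∀ i j, i < j → j < N → t i < t j) ∧
    (∀ i < N, t i ∈ Set.Ico (0:ℝ) (2 * Real.pi)) ∧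
    (∀ i, i + 1 < N → g (t i) * g (t (i + 1)) < 0)

section AuxSteklov
open Complex Real

noncomputable def fC (A B : ℝ) (n : ℕ) (z : ℂ) : ℂ :=
  A * z ^ (n : ℤ) + B * z ^ (-(n : ℤ))

noncomputable def fd1 (A B : ℝ) (n : ℕ) (z : ℂ) : ℂ :=
  A * n * z ^ ((n : ℤ) - 1) - B * n * z ^ (-(n : ℤ) - 1)

noncomputable def fd2 (A B : ℝ) (n : ℕ) (z : ℂ) : ℂ :=
  A * n * ((n : ℤ) - 1) * z ^ ((n : ℤ) - 2) + B * n * ((n : ℤ) + 1) * z ^ (-(n : ℤ) - 2)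

lemma hasDerivAt_fC (A B : ℝ) (n : ℕ) {z : ℂ} (hz : z ≠ 0) :
    HasDerivAt (fC A B n) (fd1 A B n z) z := by
  have h1 := (hasDerivAt_zpow (n : ℤ) z (Or.inl hz)).const_mul (A : ℂ)
  have h2 := (hasDerivAt_zpow (-(n : ℤ)) z (Or.inl hz)).const_mul (B : ℂ)
  have := h1.add h2
  convert this using 1
  case e'_9 =>
    simp [fd1]
    ring
  all_goals rfl

lemma hasDerivAt_fd1 (A B : ℝ) (n : ℕ) {z : ℂ} (hz : z ≠ 0) :
    HasDerivAt (fd1 A B n) (fd2 A B n z) z := by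
  have h1 := (hasDerivAt_zpow ((n : ℤ) - 1) z (Or.inl hz)).const_mul ((A : ℂ) * n)
  have h2 := (hasDerivAt_zpow (-(n : ℤ) - 1) z (Or.inl hz)).const_mul ((B : ℂ) * n)
  have := h1.sub h2
  convert this using 1
  case e'_9 =>
    simp only [fd2]
    rw [show (n:ℤ) - 1 - 1 = (n:ℤ) - 2 by ring, show -(n:ℤ) - 1 - 1 = -(n:ℤ) - 2 by ring]
    push_cast
    ring
  all_goals rfl

lemma deriv_horiz (g g' : ℂ → ℂ) (hg : ∀ z : ℂ, z ≠ 0 → HasDerivAt g (g' z) z)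
    (x y : ℝ) (h : (x : ℂ) + y * I ≠ 0) :
    HasDerivAt (fun t : ℝ => (g (t + y * I)).re) ((g' (x + y * I)).re) x := by
  have h1 : HasDerivAt (fun z : ℂ => g (z + y * I)) (g' ((x:ℂ) + y * I)) (x : ℂ) := by
    have := (hg _ h).comp (x : ℂ) ((hasDerivAt_id (x : ℂ)).add_const ((y : ℂ) * I))
    simpa [Function.comp_def] using this
  have h2 := h1.comp_ofReal
  have h3 := Complex.reCLM.hasFDerivAt.comp_hasDerivAt x h2
  simpa [Function.comp_def] using h3

lemma deriv_vert (g g' : ℂ → ℂ) (hg : ∀ z : ℂ, z ≠ 0 → HasDerivAt g (g' z) z)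
    (x y : ℝ) (h : (x : ℂ) + y * I ≠ 0) :
    HasDerivAt (fun t : ℝ => (g (x + t * I)).re) ((g' ((x:ℂ) + y * I) * I).re) y := by
  have h1 : HasDerivAt (fun z : ℂ => g (x + z * I)) (g' ((x:ℂ) + y * I) * I) (y : ℂ) := by
    have hin : HasDerivAt (fun z : ℂ => (x:ℂ) + z * I) I (y : ℂ) := by
      simpa using ((hasDerivAt_id (y : ℂ)).mul_const I).const_add (x : ℂ)
    have := (hg _ h).comp (y : ℂ) hin
    simpa [Function.comp_def] using this
  have h2 := h1.comp_ofReal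
  have h3 := Complex.reCLM.hasFDerivAt.comp_hasDerivAt y h2
  simpa [Function.comp_def] using h3

lemma deriv_ray (g g' : ℂ → ℂ) (hg : ∀ z : ℂ, z ≠ 0 → HasDerivAt g (g' z) z)
    (r : ℝ) (w : ℂ) (h : (r : ℂ) * w ≠ 0) :
    HasDerivAt (fun t : ℝ => (g (t * w)).re) ((g' ((r:ℂ) * w) * w).re) r := by
  have h1 : HasDerivAt (fun z : ℂ => g (z * w)) (g' ((r:ℂ) * w) * w) (r : ℂ) := by
    have hin : HasDerivAt (fun z : ℂ => z * w) w (r : ℂ) := by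
      simpa using (hasDerivAt_id (r : ℂ)).mul_const w
    have := (hg _ h).comp (r : ℂ) hin
    simpa [Function.comp_def] using this
  have h2 := h1.comp_ofReal
  have h3 := Complex.reCLM.hasFDerivAt.comp_hasDerivAt r h2
  simpa [Function.comp_def] using h3

lemma harm_re (g g' g'' : ℂ → ℂ) (hg : ∀ z : ℂ, z ≠ 0 → HasDerivAt g (g' z) z)
    (hg' : ∀ z : ℂ, z ≠ 0 → HasDerivAt g' (g'' z) z)
    (x y : ℝ) (h : (x : ℂ) + y * I ≠ 0) :
    iteratedDeriv 2 (fun t : ℝ => (g (t + y * I)).re) x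
      + iteratedDeriv 2 (fun t : ℝ => (g (x + t * I)).re) y = 0 := by
  have hcontx : ContinuousAt (fun t : ℝ => (t : ℂ) + y * I) x :=
    (Complex.continuous_ofReal.add continuous_const).continuousAt
  have hconty : ContinuousAt (fun t : ℝ => (x : ℂ) + t * I) y :=
    (continuous_const.add (Complex.continuous_ofReal.mul continuous_const)).continuousAt
  have hx2 : iteratedDeriv 2 (fun t : ℝ => (g (t + y * I)).re) x = (g'' ((x:ℂ) + y * I)).re := by
    rw [iteratedDeriv_succ, iteratedDeriv_one]
    have hev : deriv (fun t : ℝ => (g (t + y * I)).re) =ᶠ[nhds x]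
        fun t : ℝ => (g' (t + y * I)).re := by
      filter_upwards [hcontx.eventually_ne h] with t ht
      exact (deriv_horiz g g' hg t y ht).deriv
    rw [hev.deriv_eq]
    exact (deriv_horiz g' g'' hg' x y h).deriv
  have hy2 : iteratedDeriv 2 (fun t : ℝ => (g (x + t * I)).re) y
      = (g'' ((x:ℂ) + y * I) * I * I).re := by
    rw [iteratedDeriv_succ, iteratedDeriv_one]
    have hev : deriv (fun t : ℝ => (g (x + t * I)).re) =ᶠ[nhds y]
        fun t : ℝ => (g' (x + t * I) * I).re := by
      filter_upwards [hconty.eventually_ne h] with t ht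
      exact (deriv_vert g g' hg x t ht).deriv
    rw [hev.deriv_eq]
    have := deriv_vert (fun z => g' z * I) (fun z => g'' z * I)
      (fun z hz => (hg' z hz).mul_const I) x y h
    simpa [mul_assoc] using this.deriv
  rw [hx2, hy2]
  have : g'' ((x:ℂ) + y * I) * I * I = -g'' ((x:ℂ) + y * I) := by
    rw [mul_assoc, Complex.I_mul_I, mul_neg_one]
  rw [this, Complex.neg_re]
  ring

lemma unit_inv {w : ℂ} (hw : ‖w‖ = 1) : w⁻¹ = starRingEnd ℂ w := by
  rw [Complex.inv_def, Complex.normSq_eq_norm_sq, hw]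
  simp

lemma inv_re_eq {w : ℂ} (hw : ‖w‖ = 1) (n : ℕ) :
    (w ^ (-(n : ℤ))).re = (w ^ (n : ℤ)).re := by
  have habs : ‖w ^ (n : ℤ)‖ = 1 := by
    rw [norm_zpow, hw, one_zpow]
  rw [zpow_neg, unit_inv habs, Complex.conj_re]

lemma key_val (A B : ℝ) (n : ℕ) (ρ : ℝ) (hρ : 0 < ρ) {w : ℂ} (hw : ‖w‖ = 1) :
    (fC A B n ((ρ : ℂ) * w)).re
      = (A * ρ ^ (n : ℤ) + B * ρ ^ (-(n : ℤ))) * (w ^ (n : ℤ)).re := by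
  have h1 : ∀ m : ℤ, ((ρ : ℂ) * w) ^ m = ((ρ ^ m : ℝ) : ℂ) * w ^ m := by
    intro m
    rw [mul_zpow, Complex.ofReal_zpow]
  simp only [fC, Complex.add_re, h1]
  rw [show (A:ℂ) * (((ρ ^ (n:ℤ) : ℝ):ℂ) * w ^ (n:ℤ)) = ((A * ρ ^ (n:ℤ) : ℝ):ℂ) * w ^ (n:ℤ) by
    push_cast; ring]
  rw [show (B:ℂ) * (((ρ ^ (-(n:ℤ)) : ℝ):ℂ) * w ^ (-(n:ℤ))) = ((B * ρ ^ (-(n:ℤ)) : ℝ):ℂ) * w ^ (-(n:ℤ)) by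
    push_cast; ring]
  rw [Complex.re_ofReal_mul, Complex.re_ofReal_mul, inv_re_eq hw]
  ring

lemma fd1_mul (A B : ℝ) (n : ℕ) (ρ : ℝ) (hρ : 0 < ρ) {w : ℂ} (hw : ‖w‖ = 1) :
    (fd1 A B n ((ρ : ℂ) * w) * w).re
      = (n * A * ρ ^ ((n : ℤ) - 1) - n * B * ρ ^ (-(n : ℤ) - 1)) * (w ^ (n : ℤ)).re := by
  have hw0 : w ≠ 0 := by
    intro h; rw [h] at hw; simp at hw
  have h1 : ∀ m : ℤ, ((ρ : ℂ) * w) ^ m * w = ((ρ ^ m : ℝ) : ℂ) * w ^ (m + 1) := by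
    intro m
    rw [mul_zpow, Complex.ofReal_zpow, zpow_add_one₀ hw0]
    ring
  have e1 : (n:ℤ) - 1 + 1 = (n:ℤ) := by ring
  have e2 : -(n:ℤ) - 1 + 1 = -(n:ℤ) := by ring
  simp only [fd1, sub_mul, mul_assoc]
  rw [h1, h1, e1, e2]
  rw [Complex.sub_re,
    show (A:ℂ) * ((n:ℂ) * (((ρ ^ ((n:ℤ)-1) : ℝ):ℂ) * w ^ (n:ℤ)))
      = ((n * A * ρ ^ ((n:ℤ)-1) : ℝ):ℂ) * w ^ (n:ℤ) by push_cast; ring,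
    show (B:ℂ) * ((n:ℂ) * (((ρ ^ (-(n:ℤ)-1) : ℝ):ℂ) * w ^ (-(n:ℤ))))
      = ((n * B * ρ ^ (-(n:ℤ)-1) : ℝ):ℂ) * w ^ (-(n:ℤ)) by push_cast; ring]
  rw [Complex.re_ofReal_mul, Complex.re_ofReal_mul, inv_re_eq hw]
  ring

lemma circle_w (θ : ℝ) :
    ((Real.cos θ : ℝ) : ℂ) + (Real.sin θ : ℝ) * I = Complex.exp (θ * I) := by
  rw [Complex.exp_mul_I, Complex.ofReal_cos, Complex.ofReal_sin]

lemma circle_re (n : ℕ) (θ : ℝ) :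
    ((Complex.exp (θ * I)) ^ (n : ℤ)).re = Real.cos (n * θ) := by
  rw [zpow_natCast, ← Complex.exp_nat_mul]
  rw [show (n : ℂ) * ((θ:ℂ) * I) = ((n * θ : ℝ) : ℂ) * I by push_cast; ring]
  exact Complex.exp_ofReal_mul_I_re _


noncomputable def UF (n : ℕ) (A B : ℝ) (p : ℝ × ℝ) : ℝ :=
  (fC A B n ((p.1 : ℂ) + p.2 * I)).re

lemma fC_re (A B : ℝ) (n : ℕ) (z : ℂ) :
    (fC A B n z).re = A * (z ^ n).re + B * ((z⁻¹) ^ n).re := by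
  simp [fC, Complex.add_re, Complex.re_ofReal_mul, zpow_natCast, zpow_neg, inv_pow]

lemma abs_eq_nrm (p : ℝ × ℝ) : ‖(p.1 : ℂ) + p.2 * I‖ = nrm p := by
  rw [Complex.norm_def, Complex.normSq_add_mul_I, nrm]

lemma key_val1 (A B : ℝ) (n : ℕ) {w : ℂ} (hw : ‖w‖ = 1) :
    (fC A B n w).re = (A + B) * (w ^ (n : ℤ)).re := by
  simp only [fC, Complex.add_re, Complex.re_ofReal_mul]
  rw [inv_re_eq hw]
  ring

lemma nrm_div (p : ℝ × ℝ) (ε : ℝ) (hε : 0 < ε) (h : nrm p = ε) :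
    nrm (p.1 / ε, p.2 / ε) = 1 := by
  have hnn : (0:ℝ) ≤ p.1 ^ 2 + p.2 ^ 2 := by positivity
  have h2 : p.1 ^ 2 + p.2 ^ 2 = ε ^ 2 := by
    have := congrArg (fun x : ℝ => x ^ 2) h
    simpa [nrm, Real.sq_sqrt hnn] using this
  simp only [nrm]
  rw [show (p.1 / ε) ^ 2 + (p.2 / ε) ^ 2 = (p.1 ^ 2 + p.2 ^ 2) / ε ^ 2 by ring, h2,
    div_self (by positivity)]
  exact Real.sqrt_one

lemma UF_harm (n : ℕ) (A B : ℝ) (p : ℝ × ℝ) (hz : (p.1 : ℂ) + p.2 * I ≠ 0) :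
    iteratedDeriv 2 (fun x => UF n A B (x, p.2)) p.1
      + iteratedDeriv 2 (fun y => UF n A B (p.1, y)) p.2 = 0 :=
  harm_re (fC A B n) (fd1 A B n) (fd2 A B n)
    (fun _ hz => hasDerivAt_fC A B n hz) (fun _ hz => hasDerivAt_fd1 A B n hz) p.1 p.2 hz

lemma UF_deriv1 (n : ℕ) (A B : ℝ) (p : ℝ × ℝ) (hp : nrm p = 1) :
    deriv (fun r : ℝ => UF n A B (r * p.1, r * p.2)) 1
      = (n * A - n * B) * ((((p.1 : ℂ) + p.2 * I)) ^ (n : ℤ)).re := by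
  set w : ℂ := (p.1 : ℂ) + p.2 * I with hwdef
  have hw : ‖w‖ = 1 := by rw [hwdef, abs_eq_nrm, hp]
  have hw0 : w ≠ 0 := by intro h; rw [h] at hw; simp at hw
  have hfun : (fun r : ℝ => UF n A B (r * p.1, r * p.2))
      = fun r : ℝ => (fC A B n ((r : ℂ) * w)).re := by
    funext r
    simp only [UF]
    rw [show ((r * p.1 : ℝ) : ℂ) + ((r * p.2 : ℝ) : ℂ) * I = (r : ℂ) * w by
      rw [hwdef]; push_cast; ring]
  rw [hfun]
  have h1 : ((1:ℝ) : ℂ) * w ≠ 0 := by simpa using hw0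
  rw [(deriv_ray (fC A B n) (fd1 A B n) (fun _ hz => hasDerivAt_fC A B n hz) 1 w h1).deriv]
  rw [fd1_mul A B n 1 one_pos hw]
  simp [one_zpow]

lemma UF_val1 (n : ℕ) (A B : ℝ) (p : ℝ × ℝ) (hp : nrm p = 1) :
    UF n A B p = (A + B) * ((((p.1 : ℂ) + p.2 * I)) ^ (n : ℤ)).re := by
  have hw : ‖(p.1 : ℂ) + p.2 * I‖ = 1 := by rw [abs_eq_nrm, hp]
  exact key_val1 A B n hw

lemma UF_derivε (n : ℕ) (A B : ℝ) (ε : ℝ) (hε : 0 < ε) (p : ℝ × ℝ) (hp : nrm p = ε) :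
    deriv (fun r : ℝ => UF n A B (r * (p.1 / ε), r * (p.2 / ε))) ε
      = (n * A * ε ^ ((n:ℤ) - 1) - n * B * ε ^ (-(n:ℤ) - 1))
        * ((((p.1 / ε : ℝ) : ℂ) + ((p.2 / ε : ℝ) : ℂ) * I) ^ (n : ℤ)).re := by
  set w : ℂ := ((p.1 / ε : ℝ) : ℂ) + ((p.2 / ε : ℝ) : ℂ) * I with hwdef
  have hw : ‖w‖ = 1 := by
    rw [hwdef]
    have := abs_eq_nrm (p.1 / ε, p.2 / ε)
    simpa [nrm_div p ε hε hp] using this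
  have hw0 : w ≠ 0 := by intro h; rw [h] at hw; simp at hw
  have hfun : (fun r : ℝ => UF n A B (r * (p.1 / ε), r * (p.2 / ε)))
      = fun r : ℝ => (fC A B n ((r : ℂ) * w)).re := by
    funext r
    simp only [UF]
    rw [show ((r * (p.1 / ε) : ℝ) : ℂ) + ((r * (p.2 / ε) : ℝ) : ℂ) * I = (r : ℂ) * w by
      rw [hwdef]; push_cast; ring]
  rw [hfun]
  have h1 : ((ε:ℝ) : ℂ) * w ≠ 0 := mul_ne_zero (Complex.ofReal_ne_zero.2 hε.ne') hw0
  rw [(deriv_ray (fC A B n) (fd1 A B n) (fun _ hz => hasDerivAt_fC A B n hz) ε w h1).deriv]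
  exact fd1_mul A B n ε hε hw

lemma UF_valε (n : ℕ) (A B : ℝ) (ε : ℝ) (hε : 0 < ε) (p : ℝ × ℝ) (hp : nrm p = ε) :
    UF n A B p = (A * ε ^ (n:ℤ) + B * ε ^ (-(n:ℤ)))
      * ((((p.1 / ε : ℝ) : ℂ) + ((p.2 / ε : ℝ) : ℂ) * I) ^ (n : ℤ)).re := by
  set w : ℂ := ((p.1 / ε : ℝ) : ℂ) + ((p.2 / ε : ℝ) : ℂ) * I with hwdef
  have hw : ‖w‖ = 1 := by
    rw [hwdef]
    have := abs_eq_nrm (p.1 / ε, p.2 / ε)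
    simpa [nrm_div p ε hε hp] using this
  have harg : (p.1 : ℂ) + p.2 * I = (ε : ℂ) * w := by
    rw [hwdef]
    have hε0 : (ε : ℂ) ≠ 0 := Complex.ofReal_ne_zero.2 hε.ne'
    push_cast
    field_simp
  rw [UF, harg]
  exact key_val A B n ε hε hw

lemma UF_circle1 (n : ℕ) (A B θ : ℝ) :
    UF n A B (Real.cos θ, Real.sin θ) = (A + B) * Real.cos (n * θ) := by
  rw [UF]
  simp only
  rw [circle_w θ, key_val1 A B n (Complex.norm_exp_ofReal_mul_I θ), circle_re]

lemma UF_circleρ (n : ℕ) (A B ρ θ : ℝ) (hρ : 0 < ρ) :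
    UF n A B (ρ * Real.cos θ, ρ * Real.sin θ)
      = (A * ρ ^ (n:ℤ) + B * ρ ^ (-(n:ℤ))) * Real.cos (n * θ) := by
  rw [UF]
  simp only
  rw [show ((ρ * Real.cos θ : ℝ) : ℂ) + (ρ * Real.sin θ : ℝ) * I
      = (ρ : ℂ) * (((Real.cos θ : ℝ) : ℂ) + ((Real.sin θ : ℝ)) * I) by push_cast; ring]
  rw [circle_w θ, key_val A B n ρ hρ (Complex.norm_exp_ofReal_mul_I θ), circle_re]

lemma altOn_cos (C : ℝ) (hC : C ≠ 0) (n : ℕ) (hn : 0 < n) :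
    AltOn (fun θ => C * Real.cos (n * θ)) (2 * n) := by
  have hπ := Real.pi_pos
  have hnR : (0:ℝ) < n := by exact_mod_cast hn
  refine ⟨fun i => i * (π / n), ?_, ?_, ?_⟩
  · intro i j hij hj
    have : (i:ℝ) < j := by exact_mod_cast hij
    have hp : (0:ℝ) < π / n := by positivity
    exact mul_lt_mul_of_pos_right this hp
  · intro i hi
    constructor
    · positivity
    · have h1 : (i:ℝ) < 2 * n := by exact_mod_cast hi
      calc (i:ℝ) * (π / n) < (2 * n) * (π / n) := by
            apply mul_lt_mul_of_pos_right h1 (by positivity)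
        _ = 2 * π := by field_simp
  · intro i _
    have hval : ∀ j : ℕ, C * Real.cos (n * (j * (π / n))) = C * (-1 : ℝ) ^ j := by
      intro j
      have : (n : ℝ) * (j * (π / n)) = 0 + j * π := by field_simp; ring
      rw [this, Real.cos_add_nat_mul_pi, Real.cos_zero, mul_one]
    simp only [hval]
    have : C * (-1:ℝ)^i * (C * (-1)^(i+1)) = -(C^2) := by
      rw [pow_add]; ring_nf
      rw [show i * 2 = 2 * i by ring, pow_mul]
      norm_num
    rw [this]
    have : (0:ℝ) < C^2 := by positivity
    linarith

lemma not_altOn_cos (C : ℝ) (n : ℕ) (hn : 0 < n) :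
    ¬ AltOn (fun θ => C * Real.cos (n * θ)) (2 * n + 2) := by
  rintro ⟨t, hmono, hmem, halt⟩
  by_cases hC : C = 0
  · have := halt 0 (by omega)
    simp [hC] at this
  have hπ := Real.pi_pos
  have hcont : Continuous (fun θ : ℝ => C * Real.cos (n * θ)) := by fun_prop
  have hz : ∀ i, ∃ z, i < 2 * n + 1 →
      t i < z ∧ z < t (i + 1) ∧ Real.cos (n * z) = 0 := by
    intro i
    by_cases hi : i < 2 * n + 1
    · have hlt := hmono i (i + 1) (Nat.lt_succ_self i) (by omega)
      have hprod := halt i (by omega)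
      rcases mul_neg_iff.mp hprod with ⟨ha, hb⟩ | ⟨ha, hb⟩
      · obtain ⟨z, hzm, hz0⟩ := intermediate_value_Ioo' hlt.le hcont.continuousOn
          (show (0:ℝ) ∈ Set.Ioo (C * Real.cos (n * t (i+1))) (C * Real.cos (n * t i)) from ⟨hb, ha⟩)
        refine ⟨z, fun _ => ⟨hzm.1, hzm.2, ?_⟩⟩
        rcases mul_eq_zero.mp hz0 with h | h
        · exact absurd h hC
        · exact h
      · obtain ⟨z, hzm, hz0⟩ := intermediate_value_Ioo hlt.le hcont.continuousOn
          (show (0:ℝ) ∈ Set.Ioo (C * Real.cos (n * t i)) (C * Real.cos (n * t (i+1))) from ⟨ha, hb⟩)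
        refine ⟨z, fun _ => ⟨hzm.1, hzm.2, ?_⟩⟩
        rcases mul_eq_zero.mp hz0 with h | h
        · exact absurd h hC
        · exact h
    · exact ⟨0, fun h => absurd h hi⟩
  choose z hzp using hz
  have hk : ∀ i, ∃ k : ℤ, i < 2 * n + 1 → (n:ℝ) * z i = (2 * k + 1) * Real.pi / 2 := by
    intro i
    by_cases hi : i < 2 * n + 1
    · obtain ⟨k, hk⟩ := Real.cos_eq_zero_iff.mp ((hzp i hi).2.2)
      exact ⟨k, fun _ => hk⟩
    · exact ⟨0, fun h => absurd h hi⟩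
  choose k hkp using hk
  have hnR : (0:ℝ) < n := by exact_mod_cast hn
  -- bounds on z
  have hzpos : ∀ i, i < 2 * n + 1 → 0 < z i := fun i hi =>
    lt_of_le_of_lt (hmem i (by omega)).1 (hzp i hi).1
  have hzub : ∀ i, i < 2 * n + 1 → z i < 2 * Real.pi := fun i hi =>
    lt_trans (hzp i hi).2.1 (hmem (i+1) (by omega)).2
  -- k i ≥ 0
  have hk0 : ∀ i, i < 2 * n + 1 → 0 ≤ k i := by
    intro i hi
    have h1 : (0:ℝ) < (2 * (k i : ℝ) + 1) * Real.pi / 2 := by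
      rw [← hkp i hi]; exact mul_pos hnR (hzpos i hi)
    have h2 : (0:ℤ) < 2 * k i + 1 := by
      have : (0:ℝ) < 2 * (k i : ℝ) + 1 := by nlinarith
      exact_mod_cast this
    omega
  -- k i < 2n
  have hkub : ∀ i, i < 2 * n + 1 → k i < 2 * n := by
    intro i hi
    have h1 : (2 * (k i : ℝ) + 1) * Real.pi / 2 < (n:ℝ) * (2 * Real.pi) := by
      rw [← hkp i hi]
      exact mul_lt_mul_of_pos_left (hzub i hi) hnR
    have h2 : (2 * (k i : ℝ) + 1) < 4 * n := by nlinarith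
    have h3 : 2 * k i + 1 < 4 * (n:ℤ) := by exact_mod_cast h2
    omega
  -- strict monotone in i
  have hkmono : ∀ i, i + 1 < 2 * n + 1 → k i < k (i + 1) := by
    intro i hi
    have hz1 : z i < z (i + 1) := lt_trans (hzp i (by omega)).2.1 (hzp (i+1) hi).1
    have h1 : (2 * (k i : ℝ) + 1) * Real.pi / 2 < (2 * (k (i+1) : ℝ) + 1) * Real.pi / 2 := by
      rw [← hkp i (by omega), ← hkp (i+1) hi]
      exact mul_lt_mul_of_pos_left hz1 hnR
    have h2 : (k i : ℝ) < k (i + 1) := by nlinarith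
    exact_mod_cast h2
  have hchain : ∀ i, i ≤ 2 * n → (i : ℤ) ≤ k i := by
    intro i
    induction i with
    | zero => intro _; exact hk0 0 (by omega)
    | succ m ih =>
        intro hm
        have h1 := ih (by omega)
        have h2 := hkmono m (by omega)
        push_cast
        omega
  have := hchain (2 * n) (le_refl _)
  have := hkub (2 * n) (by omega)
  omega

lemma quad_root (ε : ℝ) (hε : 0 < ε) (hε1 : ε < 1) (n : ℕ) (hn : 0 < n) :
    ∃ lam : ℝ, 0 < lam ∧
      ε * (1 - ε ^ (2 * n)) * lam ^ 2 - n * (1 + ε) * (1 + ε ^ (2 * n)) * lam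
        + n ^ 2 * (1 - ε ^ (2 * n)) = 0 := by
  set q : ℝ := ε ^ (2 * n) with hqdef
  have hq0 : 0 < q := pow_pos hε _
  have hq1 : q < 1 := pow_lt_one₀ hε.le hε1 (by omega)
  have hnR : (0:ℝ) < n := by exact_mod_cast hn
  set a : ℝ := ε * (1 - q) with ha
  set b : ℝ := n * (1 + ε) * (1 + q) with hb
  set c : ℝ := n ^ 2 * (1 - q) with hc
  have ha0 : 0 < a := by
    apply mul_pos hε; linarith
  have hb0 : 0 < b := by
    apply mul_pos (mul_pos hnR (by linarith)); linarith
  have hD0 : 0 < b ^ 2 - 4 * a * c := by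
    rw [hb, ha, hc]
    nlinarith [sq_nonneg ((1 - ε) * (1 + q)), mul_pos hε hq0, sq_nonneg (1 - q),
      mul_pos hnR hnR, sq_nonneg ((1 + ε) * q)]
  set s : ℝ := Real.sqrt (b ^ 2 - 4 * a * c) with hs
  have hs2 : s ^ 2 = b ^ 2 - 4 * a * c := Real.sq_sqrt hD0.le
  have hsnn : 0 ≤ s := Real.sqrt_nonneg _
  refine ⟨(b + s) / (2 * a), by positivity, ?_⟩
  have h2a : 2 * a * ((b + s) / (2 * a)) = b + s := by field_simp
  have key : 4 * a * (a * ((b + s) / (2 * a)) ^ 2 - b * ((b + s) / (2 * a)) + c) = 0 := by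
    have expand : 4 * a * (a * ((b + s) / (2 * a)) ^ 2 - b * ((b + s) / (2 * a)) + c)
        = (2 * a * ((b + s) / (2 * a))) ^ 2 - 2 * b * (2 * a * ((b + s) / (2 * a))) + 4 * a * c := by
      ring
    rw [expand, h2a]
    linear_combination hs2
  have h4a : (4 : ℝ) * a ≠ 0 := by positivity
  have := (mul_eq_zero.mp key).resolve_left h4a
  linear_combination this

lemma eq2R_lemma (ε : ℝ) (hε : 0 < ε) (n : ℕ) (hn : 0 < n) (lam : ℝ)
    (hquad : ε * (1 - ε ^ (2 * n)) * lam ^ 2 - n * (1 + ε) * (1 + ε ^ (2 * n)) * lam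
      + n ^ 2 * (1 - ε ^ (2 * n)) = 0) :
    -((n:ℝ) * (lam + n) * ε ^ ((n:ℤ) - 1) - n * ((n:ℝ) - lam) * ε ^ (-(n:ℤ) - 1))
      = lam * ((lam + n) * ε ^ (n:ℤ) + ((n:ℝ) - lam) * ε ^ (-(n:ℤ))) := by
  rw [zpow_sub_one₀ hε.ne' (n:ℤ), zpow_sub_one₀ hε.ne' (-(n:ℤ)), zpow_neg, zpow_natCast]
  rw [pow_mul'] at hquad
  have hεn : (ε:ℝ) ^ n ≠ 0 := by positivity
  field_simp
  linear_combination hquad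


end AuxSteklov

/-- Steklov eigenfunctions `(A r^n + B r^{-n}) cos nθ` on the annulus `ε < |x| < 1`:
there exist `A`, `B`, not both zero, and an eigenvalue `λ` common to both boundary
circles; moreover any such eigenfunction changes sign exactly `4n` times on the full
boundary, namely exactly `2n` times on each of the two boundary circles.
Here `(A r^n + B r^{-n}) cos nθ = A Re(z^n) + B Re((z⁻¹)^n)` for `z = x + iy`, the
outward normal derivative is the radial derivative `d/dr` at `r = 1` and `-d/dr` at
`r = ε`. -/
theorem stmt14 (ε : ℝ) (hε : 0 < ε) (hε1 : ε < 1) (n : ℕ) (hn : 0 < n)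
    (uf : ℝ → ℝ → ℝ × ℝ → ℝ)
    (huf : uf = fun A B p => A * (((p.1 : ℂ) + p.2 * Complex.I) ^ n).re
      + B * ((((p.1 : ℂ) + p.2 * Complex.I)⁻¹) ^ n).re)
    (Stek : ℝ → ℝ → ℝ → Prop)
    (hStek : Stek = fun A B lam =>
      Harm2 (uf A B) {p | ε < nrm p ∧ nrm p < 1} ∧
      (∀ p : ℝ × ℝ, nrm p = 1 →
        deriv (fun r : ℝ => uf A B (r * p.1, r * p.2)) 1 = lam * uf A B p) ∧
      (∀ p : ℝ × ℝ, nrm p = ε →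
        -(deriv (fun r : ℝ => uf A B (r * (p.1 / ε), r * (p.2 / ε))) ε)
          = lam * uf A B p)) :
    (∃ A B lam : ℝ, ¬ (A = 0 ∧ B = 0) ∧ Stek A B lam) ∧
    (∀ A B lam : ℝ, ¬ (A = 0 ∧ B = 0) → Stek A B lam →
      (AltOn (fun θ => uf A B (Real.cos θ, Real.sin θ)) (2 * n) ∧
        ¬ AltOn (fun θ => uf A B (Real.cos θ, Real.sin θ)) (2 * n + 2)) ∧
      (AltOn (fun θ => uf A B (ε * Real.cos θ, ε * Real.sin θ)) (2 * n) ∧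
        ¬ AltOn (fun θ => uf A B (ε * Real.cos θ, ε * Real.sin θ)) (2 * n + 2))) := by
  subst hStek
  have hufC : uf = UF n := by
    rw [huf]; funext A B p; exact (fC_re A B n _).symm
  subst hufC
  have hnR : (0:ℝ) < n := by exact_mod_cast hn
  constructor
  · -- existence
    obtain ⟨lam, hlam0, hquad⟩ := quad_root ε hε hε1 n hn
    set A : ℝ := lam + n with hA
    set B : ℝ := (n : ℝ) - lam with hB
    have eq1R : (n:ℝ) * A - n * B = lam * (A + B) := by rw [hA, hB]; ring
    have eq2R : -((n:ℝ) * A * ε ^ ((n:ℤ) - 1) - n * B * ε ^ (-(n:ℤ) - 1))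
        = lam * (A * ε ^ (n:ℤ) + B * ε ^ (-(n:ℤ))) := by
      rw [hA, hB]
      exact eq2R_lemma ε hε n hn lam hquad
    refine ⟨A, B, lam, ?_, ?_, ?_, ?_⟩
    · rintro ⟨h1, h2⟩
      rw [hA] at h1
      linarith
    · intro p hp
      have hz : (p.1 : ℂ) + p.2 * Complex.I ≠ 0 := by
        intro h0
        have h1 := abs_eq_nrm p
        rw [h0] at h1
        simp at h1
        have := hp.1
        rw [← h1] at this
        linarith
      exact UF_harm n A B p hz
    · intro p hp
      rw [UF_deriv1 n A B p hp, UF_val1 n A B p hp, eq1R]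
      ring
    · intro p hp
      rw [UF_derivε n A B ε hε p hp, UF_valε n A B ε hε p hp, ← neg_mul, eq2R]
      ring
  · -- uniqueness of sign-change count
    intro A B lam hAB hS
    obtain ⟨hharm, hb1, hb2⟩ := hS
    have h10 : nrm ((1:ℝ), (0:ℝ)) = 1 := by simp [nrm]
    have hεp : nrm ((ε:ℝ), (0:ℝ)) = ε := by
      simp [nrm, Real.sqrt_sq hε.le]
    have e1 := hb1 (1, 0) h10
    rw [UF_deriv1 n A B (1, 0) h10, UF_val1 n A B (1, 0) h10] at e1
    norm_num at e1
    have e2 := hb2 (ε, 0) hεp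
    rw [UF_derivε n A B ε hε (ε, 0) hεp, UF_valε n A B ε hε (ε, 0) hεp] at e2
    norm_num [div_self hε.ne'] at e2
    have hC1 : A + B ≠ 0 := by
      intro h
      rw [h, mul_zero] at e1
      have hABeq : A - B = 0 := by
        rcases mul_eq_zero.mp (show (n:ℝ) * (A - B) = 0 by linarith) with h' | h'
        · exact absurd h' (by positivity)
        · exact h'
      exact hAB ⟨by linarith, by linarith⟩
    have hP : (0:ℝ) < ε ^ (n:ℤ) := zpow_pos hε _
    have hQ : (0:ℝ) < ε ^ (-(n:ℤ)) := zpow_pos hε _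
    have hCε : A * ε ^ (n:ℤ) + B * ε ^ (-(n:ℤ)) ≠ 0 := by
      intro h
      rw [zpow_natCast, zpow_neg, zpow_natCast] at h
      rw [h, mul_zero] at e2
      rw [zpow_sub_one₀ hε.ne' (n:ℤ), zpow_sub_one₀ hε.ne' (-(n:ℤ))] at e2
      have h2 : (n:ℝ) * ε⁻¹ * (B * ε ^ (-(n:ℤ)) - A * ε ^ (n:ℤ)) = 0 := by
        linear_combination e2
      rw [zpow_natCast, zpow_neg, zpow_natCast] at h2
      have h3 : B * (ε ^ n)⁻¹ - A * ε ^ n = 0 := by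
        rcases mul_eq_zero.mp h2 with h' | h'
        · exact absurd h' (by positivity)
        · exact h'
      have hεn : (0:ℝ) < ε ^ n := by positivity
      have hB0 : B = 0 := by
        have hB' : B * (ε ^ n)⁻¹ = 0 := by linarith
        rcases mul_eq_zero.mp hB' with h' | h'
        · exact h'
        · exact absurd h' (by positivity)
      have hA0 : A = 0 := by
        rw [hB0] at h
        simpa [hεn.ne'] using h
      exact hAB ⟨hA0, hB0⟩
    have hfun1 : (fun θ => UF n A B (Real.cos θ, Real.sin θ))
        = fun θ => (A + B) * Real.cos (n * θ) := funext fun θ => UF_circle1 n A B θ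
    have hfunε : (fun θ => UF n A B (ε * Real.cos θ, ε * Real.sin θ))
        = fun θ => (A * ε ^ (n:ℤ) + B * ε ^ (-(n:ℤ))) * Real.cos (n * θ) :=
      funext fun θ => UF_circleρ n A B ε θ hε
    exact ⟨⟨by rw [hfun1]; exact altOn_cos _ hC1 n hn,
            by rw [hfun1]; exact not_altOn_cos _ n hn⟩,
           ⟨by rw [hfunε]; exact altOn_cos _ hCε n hn,
            by rw [hfunε]; exact not_altOn_cos _ n hn⟩⟩
end

section
/- If P is a noncrossing partition of a finite totally ordered set X and B is a block of P with at least two elements, min(B) = a, max(B) = b, then |P| = |P'| + |P''| − 1, where P' is the restriction of P to X' = {x ∈ X : x ≤ a or x > b} and P'' is the restriction of P to X'' = {x ∈ X : a < x ≤ b}. -/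
open Finset

/-- If `P` is a noncrossing partition of a finite totally ordered set `X` and `B` is a
block with at least two elements, `a = min B`, `b = max B`, then
`|P| = |P'| + |P''| - 1`, where `P'` and `P''` are the restrictions of `P` to
`X' = {x : x ≤ a ∨ b < x}` and `X'' = {x : a < x ≤ b}`, respectively. -/
theorem stmt15 {α : Type*} [LinearOrder α] [Fintype α] [DecidableEq α]
    (P : Finpartition (univ : Finset α)) (hnc : NoncrossingFam P.parts)
    (B : Finset α) (hB : B ∈ P.parts) (hne : B.Nonempty) (h2 : 2 ≤ B.card)
    (X' X'' : Finset α)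
    (hX' : X' = univ.filter (fun x => x ≤ B.min' hne ∨ B.max' hne < x))
    (hX'' : X'' = univ.filter (fun x => B.min' hne < x ∧ x ≤ B.max' hne)) :
    P.parts.card =
      ((P.parts.image (fun C => C ∩ X')).filter (fun s => s.Nonempty)).card +
      ((P.parts.image (fun C => C ∩ X'')).filter (fun s => s.Nonempty)).card - 1 := by
  classical
  set a := B.min' hne with ha
  set b := B.max' hne with hb
  have hab : a < b := B.min'_lt_max'_of_card (by omega)
  have haB : a ∈ B := B.min'_mem hne
  have hbB : b ∈ B := B.max'_mem hne
  have hmemX' : ∀ x : α, x ∈ X' ↔ (x ≤ a ∨ b < x) := by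
    intro x; rw [hX']; simp
  have hmemX'' : ∀ x : α, x ∈ X'' ↔ (a < x ∧ x ≤ b) := by
    intro x; rw [hX'']; simp
  set S1 := P.parts.filter (fun C => (C ∩ X').Nonempty) with hS1
  set S2 := P.parts.filter (fun C => (C ∩ X'').Nonempty) with hS2
  -- distinct parts are disjoint
  have hdisj : ∀ C ∈ P.parts, ∀ D ∈ P.parts, C ≠ D → Disjoint C D := by
    intro C hC D hD hCD
    exact P.disjoint hC hD hCD
  -- the two filtered images are images of S1, S2
  have him1 : (P.parts.image (fun C => C ∩ X')).filter (fun s => s.Nonempty)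
      = S1.image (fun C => C ∩ X') := by
    rw [hS1, Finset.filter_image]
  have him2 : (P.parts.image (fun C => C ∩ X'')).filter (fun s => s.Nonempty)
      = S2.image (fun C => C ∩ X'') := by
    rw [hS2, Finset.filter_image]
  have hinj1 : Set.InjOn (fun C => C ∩ X') S1 := by
    intro C hC D hD h
    by_contra hne'
    obtain ⟨hCp, ⟨x, hx⟩⟩ := mem_filter.mp hC
    obtain ⟨hDp, _⟩ := mem_filter.mp hD
    have h' : C ∩ X' = D ∩ X' := h
    have hxD : x ∈ D ∩ X' := h' ▸ hx
    exact Finset.disjoint_left.mp (hdisj C hCp D hDp hne') (mem_inter.mp hx).1 (mem_inter.mp hxD).1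
  have hinj2 : Set.InjOn (fun C => C ∩ X'') S2 := by
    intro C hC D hD h
    by_contra hne'
    obtain ⟨hCp, ⟨x, hx⟩⟩ := mem_filter.mp hC
    obtain ⟨hDp, _⟩ := mem_filter.mp hD
    have h' : C ∩ X'' = D ∩ X'' := h
    have hxD : x ∈ D ∩ X'' := h' ▸ hx
    exact Finset.disjoint_left.mp (hdisj C hCp D hDp hne') (mem_inter.mp hx).1 (mem_inter.mp hxD).1
  have hc1 : ((P.parts.image (fun C => C ∩ X')).filter (fun s => s.Nonempty)).card = S1.card := by
    rw [him1, Finset.card_image_of_injOn hinj1]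
  have hc2 : ((P.parts.image (fun C => C ∩ X'')).filter (fun s => s.Nonempty)).card = S2.card := by
    rw [him2, Finset.card_image_of_injOn hinj2]
  -- union is all parts
  have hunion : S1 ∪ S2 = P.parts := by
    apply Finset.Subset.antisymm
    · exact Finset.union_subset (filter_subset _ _) (filter_subset _ _)
    · intro C hC
      obtain ⟨x, hx⟩ := P.nonempty_of_mem_parts hC
      rcases le_or_gt x a with h | h
      · exact Finset.mem_union_left _ (mem_filter.mpr ⟨hC, ⟨x, mem_inter.mpr ⟨hx, (hmemX' x).mpr (Or.inl h)⟩⟩⟩)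
      · rcases le_or_gt x b with h' | h'
        · exact Finset.mem_union_right _ (mem_filter.mpr ⟨hC, ⟨x, mem_inter.mpr ⟨hx, (hmemX'' x).mpr ⟨h, h'⟩⟩⟩⟩)
        · exact Finset.mem_union_left _ (mem_filter.mpr ⟨hC, ⟨x, mem_inter.mpr ⟨hx, (hmemX' x).mpr (Or.inr h')⟩⟩⟩)
  -- intersection is {B}
  have hinter : S1 ∩ S2 = {B} := by
    apply Finset.Subset.antisymm
    · intro C hC
      obtain ⟨hC1, hC2⟩ := mem_inter.mp hC
      obtain ⟨hCp, ⟨x, hx⟩⟩ := mem_filter.mp hC1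
      obtain ⟨_, ⟨y, hy⟩⟩ := mem_filter.mp hC2
      obtain ⟨hxC, hxX⟩ := mem_inter.mp hx
      obtain ⟨hyC, hyX⟩ := mem_inter.mp hy
      rw [hmemX' x] at hxX
      rw [hmemX'' y] at hyX
      rw [Finset.mem_singleton]
      by_contra hne'
      have hd := hdisj C hCp B hB hne'
      have hxnB : x ∉ B := fun h => Finset.disjoint_left.mp hd hxC h
      have hynB : y ∉ B := fun h => Finset.disjoint_left.mp hd hyC h
      have hylt : y < b := lt_of_le_of_ne hyX.2 (fun h => hynB (h ▸ hbB))
      rcases hxX with h | h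
      · have hxa : x < a := lt_of_le_of_ne h (fun h' => hxnB (h' ▸ haB))
        exact hnc C hCp B hB hne' ⟨x, a, y, b, hxa, hyX.1, hylt, hxC, hyC, haB, hbB⟩
      · exact hnc B hB C hCp (fun h' => hne' h'.symm) ⟨a, y, b, x, hyX.1, hylt, h, haB, hbB, hyC, hxC⟩
    · intro C hC
      rw [Finset.mem_singleton] at hC
      subst hC
      refine mem_inter.mpr ⟨mem_filter.mpr ⟨hB, ⟨a, mem_inter.mpr ⟨haB, (hmemX' a).mpr (Or.inl le_rfl)⟩⟩⟩,
        mem_filter.mpr ⟨hB, ⟨b, mem_inter.mpr ⟨hbB, (hmemX'' b).mpr ⟨hab, le_rfl⟩⟩⟩⟩⟩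
  have hkey : S1.card + S2.card = P.parts.card + 1 := by
    rw [← Finset.card_union_add_card_inter, hunion, hinter, Finset.card_singleton]
  rw [hc1, hc2]
  omega
end

section
/- Any partition of the alternating set X = {x_1^+ < x_1^- < ... < x_n^+ < x_n^-} in which every block is monochromatic (contained in X^+ or in X^-) and which has at most n blocks must contain two blocks that cross. -/
open Finset

lemma key {β : Type*} [DecidableEq β] (f : ℕ → β) :
    ∀ S : Finset ℕ,
    (∀ a ∈ S, ∀ b ∈ S, ∀ c ∈ S, ∀ d ∈ S,
      a < b → b < c → c < d → f a = f c → f b = f d → f a = f b) →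
    (∀ a ∈ S, ∀ b ∈ S, a < b → (∀ z ∈ S, ¬(a < z ∧ z < b)) → f a ≠ f b) →
    S.Nonempty → S.card + 1 ≤ 2 * (S.image f).card := by
  intro S
  induction S using Finset.strongInduction with
  | _ S ih =>
  intro hnc hadj hS
  set m0 := S.min' hS with hm0def
  have hm0S : m0 ∈ S := S.min'_mem hS
  have hmin : ∀ z ∈ S, m0 ≤ z := fun z hz => S.min'_le z hz
  by_cases hex : ∃ y ∈ S, m0 < y ∧ f y = f m0
  · -- the block of m0 has another element
    have hYne : (S.filter (fun z => m0 < z ∧ f z = f m0)).Nonempty := by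
      obtain ⟨y, hy, h1, h2⟩ := hex
      exact ⟨y, mem_filter.mpr ⟨hy, h1, h2⟩⟩
    set Y := S.filter (fun z => m0 < z ∧ f z = f m0) with hYdef
    set y := Y.min' hYne with hydef
    have hyY : y ∈ Y := Y.min'_mem hYne
    have hyS : y ∈ S := (mem_filter.mp hyY).1
    have h1 : m0 < y := (mem_filter.mp hyY).2.1
    have h2 : f y = f m0 := (mem_filter.mp hyY).2.2
    have hymin : ∀ z ∈ Y, y ≤ z := fun z hz => Y.min'_le z hz
    set I := S.filter (fun z => m0 < z ∧ z < y) with hIdef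
    have hImem : ∀ z, z ∈ I ↔ z ∈ S ∧ m0 < z ∧ z < y := by
      intro z; simp [hIdef]
    have hIne : I.Nonempty := by
      by_contra hemp
      rw [not_nonempty_iff_eq_empty] at hemp
      refine hadj m0 hm0S y hyS h1 ?_ h2.symm
      intro z hz hzz
      have : z ∈ I := (hImem z).mpr ⟨hz, hzz.1, hzz.2⟩
      simp [hemp] at this
    have hclosed : ∀ z ∈ I, ∀ w ∈ S, f w = f z → w ∈ I := by
      intro z hz w hw hfw
      obtain ⟨hzS, hz1, hz2⟩ := (hImem z).mp hz
      have hzY : f z ≠ f m0 := by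
        intro h
        have : z ∈ Y := mem_filter.mpr ⟨hzS, hz1, h⟩
        exact absurd (hymin z this) (not_le.mpr hz2)
      have hwm : m0 < w := by
        rcases lt_or_eq_of_le (hmin w hw) with h | h
        · exact h
        · exact absurd (h ▸ hfw : f m0 = f z) (fun hh => hzY hh.symm)
      rcases lt_trichotomy w y with hwy | hwy | hwy
      · exact (hImem w).mpr ⟨hw, hwm, hwy⟩
      · exact absurd (hwy ▸ hfw : f y = f z) (fun hh => hzY (hh.symm.trans h2))
      · have := hnc m0 hm0S z hzS y hyS w hw hz1 hz2 hwy h2.symm hfw.symm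
        exact absurd this.symm hzY
    set S' := S.filter (fun z => y ≤ z) with hS'def
    have hS'mem : ∀ z, z ∈ S' ↔ z ∈ S ∧ y ≤ z := by intro z; simp [hS'def]
    have hyS' : y ∈ S' := (hS'mem y).mpr ⟨hyS, le_refl y⟩
    -- partition decomposition
    have hm0nI : m0 ∉ I := fun h => absurd ((hImem m0).mp h).2.1 (lt_irrefl m0)
    have hm0nS' : m0 ∉ S' := fun h => absurd ((hS'mem m0).mp h).2 (not_le.mpr h1)
    have hdisj : Disjoint I S' := by
      rw [disjoint_left]
      intro z hzI hzS'
      exact absurd ((hS'mem z).mp hzS').2 (not_le.mpr ((hImem z).mp hzI).2.2)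
    have hdecomp : S = insert m0 (I ∪ S') := by
      ext z
      simp only [mem_insert, mem_union, hImem, hS'mem]
      constructor
      · intro hz
        rcases eq_or_lt_of_le (hmin z hz) with h | h
        · exact Or.inl h.symm
        · rcases lt_or_ge z y with h' | h'
          · exact Or.inr (Or.inl ⟨hz, h, h'⟩)
          · exact Or.inr (Or.inr ⟨hz, h'⟩)
      · rintro (rfl | ⟨hz, _⟩ | ⟨hz, _⟩) <;> first | exact hm0S | exact hz
    have hcard : S.card = 1 + I.card + S'.card := by
      rw [hdecomp, card_insert_of_notMem (by simp [hm0nI, hm0nS']),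
        card_union_of_disjoint hdisj]
      omega
    -- images
    have himdisj : Disjoint (I.image f) (S'.image f) := by
      rw [disjoint_left]
      intro v hvI hvS'
      obtain ⟨z, hz, rfl⟩ := mem_image.mp hvI
      obtain ⟨w, hw, hfw⟩ := mem_image.mp hvS'
      have hwS : w ∈ S := ((hS'mem w).mp hw).1
      have : w ∈ I := hclosed z hz w hwS hfw
      exact absurd ((hS'mem w).mp hw).2 (not_le.mpr ((hImem w).mp this).2.2)
    have himage : S.image f = I.image f ∪ S'.image f := by
      rw [hdecomp]
      rw [image_insert, image_union]
      have : f m0 ∈ S'.image f := mem_image.mpr ⟨y, hyS', h2⟩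
      rw [insert_eq_self.mpr (mem_union.mpr (Or.inr this))]
    have himcard : (S.image f).card = (I.image f).card + (S'.image f).card := by
      rw [himage, card_union_of_disjoint himdisj]
    -- induction hypotheses
    have hIsubS : I ⊆ S := fun z hz => ((hImem z).mp hz).1
    have hS'subS : S' ⊆ S := fun z hz => ((hS'mem z).mp hz).1
    have hIss : I ⊂ S := ⟨hIsubS, fun h => absurd (h hyS) (fun hh => absurd ((hImem y).mp hh).2.2 (lt_irrefl y))⟩
    have hS'ss : S' ⊂ S := ⟨hS'subS, fun h => hm0nS' (h hm0S)⟩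
    have ihI := ih I hIss
      (fun a ha b hb c hc d hd => hnc a (hIsubS ha) b (hIsubS hb) c (hIsubS hc) d (hIsubS hd))
      (by
        intro a ha b hb hab hno
        refine hadj a (hIsubS ha) b (hIsubS hb) hab ?_
        intro z hz hzz
        refine hno z ((hImem z).mpr ⟨hz, ?_, ?_⟩) hzz
        · exact lt_trans ((hImem a).mp ha).2.1 hzz.1
        · exact lt_trans hzz.2 ((hImem b).mp hb).2.2)
      hIne
    have ihS' := ih S' hS'ss
      (fun a ha b hb c hc d hd => hnc a (hS'subS ha) b (hS'subS hb) c (hS'subS hc) d (hS'subS hd))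
      (by
        intro a ha b hb hab hno
        refine hadj a (hS'subS ha) b (hS'subS hb) hab ?_
        intro z hz hzz
        refine hno z ((hS'mem z).mpr ⟨hz, le_of_lt (lt_of_le_of_lt ((hS'mem a).mp ha).2 hzz.1)⟩) hzz)
      ⟨y, hyS'⟩
    omega
  · -- m0 is a singleton block
    push_neg at hex
    set T := S.erase m0 with hTdef
    have hTsub : T ⊆ S := erase_subset m0 S
    have hne : f m0 ∉ T.image f := by
      intro h
      obtain ⟨z, hz, hfz⟩ := mem_image.mp h
      have hzS : z ∈ S := hTsub hz
      have hzne : z ≠ m0 := ne_of_mem_erase hz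
      exact hex z hzS (lt_of_le_of_ne (hmin z hzS) (Ne.symm hzne)) hfz
    have himage : S.image f = insert (f m0) (T.image f) := by
      conv_lhs => rw [show S = insert m0 T from (insert_erase hm0S).symm]
      rw [image_insert]
    have hcardim : (S.image f).card = (T.image f).card + 1 := by
      rw [himage, card_insert_of_notMem hne]
    have hcardS : S.card = T.card + 1 := by
      rw [hTdef, card_erase_of_mem hm0S]
      have := card_pos.mpr hS
      omega
    rcases T.eq_empty_or_nonempty with hT | hT
    · simp [hT] at hcardS ⊢
      omega
    · have ihT := ih T ⟨hTsub, fun h => (notMem_erase m0 S) (h hm0S)⟩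
        (fun a ha b hb c hc d hd => hnc a (hTsub ha) b (hTsub hb) c (hTsub hc) d (hTsub hd))
        (by
          intro a ha b hb hab hno
          refine hadj a (hTsub ha) b (hTsub hb) hab ?_
          intro z hz hzz
          have hzne : z ≠ m0 := by
            have : m0 ≤ a := hmin a (hTsub ha)
            omega
          exact hno z (mem_erase.mpr ⟨hzne, hz⟩) hzz)
        hT
      omega

/-- Any monochromatic partition of the alternating `2n`-element set with at most `n`
blocks must contain two blocks that cross (contrapositive of the MNP block bound). -/
theorem stmt17 (n : ℕ) (hn : 0 < n) (P : Finpartition (univ : Finset (Fin (2 * n))))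
    (hm : Mono P) (hc : P.parts.card ≤ n) :
    ∃ B ∈ P.parts, ∃ B' ∈ P.parts, B ≠ B' ∧ Crosses B B' := by
  by_contra h
  push_neg at h
  set f : ℕ → Finset (Fin (2*n)) := fun k => if hk : k < 2*n then P.part ⟨k, hk⟩ else ∅ with hfdef
  have hfeq : ∀ (k : ℕ) (hk : k < 2*n), f k = P.part ⟨k, hk⟩ := by
    intro k hk; simp [hfdef, hk]
  have hmemf : ∀ (k : ℕ) (hk : k < 2*n), (⟨k, hk⟩ : Fin (2*n)) ∈ f k := by
    intro k hk; rw [hfeq k hk]; exact P.mem_part (mem_univ _)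
  have hpart : ∀ (k : ℕ) (hk : k < 2*n), f k ∈ P.parts := by
    intro k hk; rw [hfeq k hk]; exact P.part_mem.mpr (mem_univ _)
  set S := Finset.range (2*n) with hSdef
  have h1 := key f S
    (by
      intro a ha b hb c hc d hd hab hbc hcd hac hbd
      rw [mem_range] at ha hb hc hd
      by_contra hne
      refine h (f a) (hpart a ha) (f b) (hpart b hb) hne
        ⟨⟨a, ha⟩, ⟨b, hb⟩, ⟨c, hc⟩, ⟨d, hd⟩, hab, hbc, hcd,
          hmemf a ha, hac ▸ hmemf c hc, hmemf b hb, hbd ▸ hmemf d hd⟩)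
    (by
      intro a ha b hb hab hno hfab
      rw [mem_range] at ha hb
      have hb1 : b = a + 1 := by
        by_contra hne
        exact hno (a+1) (mem_range.mpr (by omega)) ⟨by omega, by omega⟩
      have hamem : (⟨a, ha⟩ : Fin (2*n)) ∈ f a := hmemf a ha
      have hbmem : (⟨b, hb⟩ : Fin (2*n)) ∈ f a := hfab ▸ hmemf b hb
      rcases hm (f a) (hpart a ha) with hev | hod
      · have e1 := hev _ hamem
        have e2 := hev _ hbmem
        simp only [Fin.val_mk] at e1 e2
        obtain ⟨x, hx⟩ := e1; obtain ⟨y, hy⟩ := e2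
        omega
      · have e1 := hod _ hamem
        have e2 := hod _ hbmem
        simp only [Fin.val_mk] at e1 e2
        obtain ⟨x, hx⟩ := e1; obtain ⟨y, hy⟩ := e2
        omega)
    (by
      refine ⟨0, mem_range.mpr ?_⟩; omega)
  have hsub : S.image f ⊆ P.parts := by
    intro B hB
    obtain ⟨k, hk, rfl⟩ := mem_image.mp hB
    exact hpart k (mem_range.mp hk)
  have := card_le_card hsub
  rw [card_range] at h1
  omega
end
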